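/- arXiv:1211.2687 — 5 statements merged into one kernel-verified Lean document; each statement's English description precedes it below -/
import Mathlib

section
/- Under the PD-quad algorithm run with the constant parameter ε(t) = B²/√(2n) for all t, for every item-size distribution F and every n ≥ 1, the expected waste after packing n items satisfies E[W^{PD-quad}(n)] ≤ E[W^{OPT}(n)] + √(2·B⁴·n), where the expectation is over the i.i.d. item sequence. -/
/-- Update of the level counts when an item of size `sz` is placed at level `h`
(with `h = 0` meaning a fresh empty bin): the count of level `h + sz` increases by one,
and if `h ≥ 1` and the count of level `h` is positive it decreases by one (if `h ≥ 1`
and no level-`h` bin exists, a new bin with a forbidden hole of size `h` at its bottom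
is opened, which coincides with truncated subtraction on `ℕ`). -/
def binUpdate (N : ℕ → ℕ) (h sz : ℕ) : ℕ → ℕ := fun h' =>
  (if h' = h ∧ 1 ≤ h then N h' - 1 else N h') + if h' = h + sz then 1 else 0

/-- `binState sz place t h` is the number of bins of level `h` after the first `t` items
have been packed, where the `t`-th item (`0`-indexed) has size `sz t` and is placed at
level `place t`; initially there are no bins. -/
def binState (sz place : ℕ → ℕ) : ℕ → ℕ → ℕ
  | 0 => fun _ => 0
  | t + 1 => binUpdate (binState sz place t) (place t) (sz t)

/-- The quantity minimized by the PD-quad algorithm when an item of size `sz` is placed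
at level `h`: `B·1{h = B−sz} − sz + (ε/2)·∑_{h'=1}^{B−1} N_{h'}²`, evaluated at the
level counts *after* the placement. -/
noncomputable def quadObj (B : ℕ) (ε : ℝ) (N : ℕ → ℕ) (sz h : ℕ) : ℝ :=
  (B : ℝ) * (if h = B - sz then 1 else 0) - (sz : ℝ) +
    ε / 2 * ∑ h' ∈ Finset.Icc 1 (B - 1), ((binUpdate N h sz h' : ℕ) : ℝ) ^ 2

/-- One step of the PD-quad algorithm with parameter `ε`: given current level counts
`N`, an item of size `sz` is placed at a level `h ∈ {0, 1, …, B − sz}` minimizing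
`quadObj` (ties broken arbitrarily). -/
def PDQuadStep (B : ℕ) (ε : ℝ) (N : ℕ → ℕ) (sz h : ℕ) : Prop :=
  h ≤ B - sz ∧ ∀ h' ≤ B - sz, quadObj B ε N sz h ≤ quadObj B ε N sz h'

/-- The quantity minimized by the PD-exp algorithm when an item of size `sz` is placed
at level `h`: `B·1{h = 0} − sz + (B/ε)·∑_{h'=1}^{B−1} exp(−ε·N_{h'})`, evaluated at the
level counts *after* the placement. -/
noncomputable def expObj (B : ℕ) (ε : ℝ) (N : ℕ → ℕ) (sz h : ℕ) : ℝ :=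
  (B : ℝ) * (if h = 0 then 1 else 0) - (sz : ℝ) +
    (B : ℝ) / ε * ∑ h' ∈ Finset.Icc 1 (B - 1),
      Real.exp (-ε * ((binUpdate N h sz h' : ℕ) : ℝ))

/-- Feasible placement levels for PD-exp: a fresh bin (`h = 0`), or an existing
partially filled bin of level `h ∈ {1, …, B − sz}` with `N h > 0`. -/
def expFeasible (B : ℕ) (N : ℕ → ℕ) (sz h : ℕ) : Prop :=
  h = 0 ∨ (1 ≤ h ∧ h ≤ B - sz ∧ 0 < N h)

/-- One step of the PD-exp algorithm with parameter `ε`: given current level counts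
`N`, an item of size `sz` is placed at a feasible level `h` minimizing `expObj`
(ties broken arbitrarily). -/
def PDExpStep (B : ℕ) (ε : ℝ) (N : ℕ → ℕ) (sz h : ℕ) : Prop :=
  expFeasible B N sz h ∧
    ∀ h', expFeasible B N sz h' → expObj B ε N sz h ≤ expObj B ε N sz h'

/-- The waste of the online algorithm after `n` items:
`B · (number of non-empty bins) − (total size of the n items)`; every non-empty bin has
a level in `{1, …, B}`. -/
noncomputable def algWaste (B n : ℕ) (sz place : ℕ → ℕ) : ℝ :=
  (B : ℝ) * ∑ h ∈ Finset.Icc 1 B, (binState sz place n h : ℝ) -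
    ∑ t ∈ Finset.range n, (sz t : ℝ)

/-- `optWaste B n sz` is the minimum possible waste
`B · (number of non-empty bins) − (total size)` over all offline packings of the `n`
items of sizes `sz 0, …, sz (n-1)` into bins of capacity `B` (at most `n` bins are
ever needed, so bins are indexed by `Fin n`). -/
noncomputable def optWaste (B n : ℕ) (sz : ℕ → ℕ) : ℕ :=
  sInf { w : ℕ | ∃ f : Fin n → Fin n,
    (∀ b : Fin n, ∑ i ∈ Finset.univ.filter (fun i => f i = b), sz i ≤ B) ∧
    w + ∑ i : Fin n, sz i = B * (Finset.univ.image f).card }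

/-- The sequence of item sizes determined by the type sequence `σ`:
the `t`-th item (`0`-indexed, `t < n`) has type `σ t` and size `s (σ t)`. -/
def seqSizes {J : ℕ} (n : ℕ) (s : Fin J → ℕ) (σ : Fin n → Fin J) : ℕ → ℕ :=
  fun t => if h : t < n then s (σ ⟨t, h⟩) else 0


/-!
Primal–dual argument. With `Φ(N) = ε/2 · ∑_{0<h<B} N_h²`, the PD-quad objective at the chosen
level exceeds `Φ(N)` by at most `ε` plus the minimum over all levels of its linearization at `N`;
this minimum is the dual price `y_t` of item `t`. Telescoping, the waste is at most
`∑_t y_t + nε + (B-1)B²/(2ε)`, where the last term bounds `B·∑_{0<h<B} N_h − Φ(N)`.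

For every fixed state `N` the prices `dualPrice N` are dual feasible: stacking the items of one
bin upward from level `B − (their total size)`, their linearized costs telescope to at most `B`.
Weak duality then bounds `n·E[dualPrice N (size)]` by `E[W^OPT]`. The state before item `t` is
independent of item `t`, so `E[y_t] ≤ E[W^OPT]/n`, and `ε = B²/√(2n)` balances the two error terms.
-/

noncomputable def placementCost (B sz h : ℕ) : ℝ :=
  (B : ℝ) * (if h = B - sz then 1 else 0) - sz

noncomputable def quadPotential (B : ℕ) (ε : ℝ) (N : ℕ → ℕ) : ℝ :=
  ε / 2 * ∑ k ∈ Finset.Icc 1 (B - 1), ((N k : ℕ) : ℝ) ^ 2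

def partialCount (B : ℕ) (N : ℕ → ℕ) (k : ℕ) : ℝ :=
  if k ∈ Finset.Icc 1 (B - 1) then N k else 0

noncomputable def linObj (B : ℕ) (ε : ℝ) (N : ℕ → ℕ) (sz h : ℕ) : ℝ :=
  placementCost B sz h + ε * (partialCount B N (h + sz) - partialCount B N h)

noncomputable def dualPrice (B : ℕ) (ε : ℝ) (N : ℕ → ℕ) (sz : ℕ) : ℝ :=
  (Finset.range (B - sz + 1)).inf' Finset.nonempty_range_add_one (linObj B ε N sz)

lemma partialCount_nonneg (B : ℕ) (N : ℕ → ℕ) (k : ℕ) : 0 ≤ partialCount B N k := by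
  unfold partialCount; positivity

lemma binUpdate_sq_le (N : ℕ → ℕ) (h sz k : ℕ) (hk : 1 ≤ k) :
    ((binUpdate N h sz k : ℕ) : ℝ) ^ 2 ≤ (N k : ℝ) ^ 2 +
      (if k = h + sz then 2 * (N k : ℝ) + 1 else 0) + (if k = h then 1 - 2 * (N k : ℝ) else 0) := by
  unfold binUpdate
  rcases Nat.eq_zero_or_pos (N k) with h0 | h0 <;>
    split_ifs <;> simp_all [Nat.one_le_iff_ne_zero] <;> nlinarith

lemma quadPotential_binUpdate_le (B : ℕ) {ε : ℝ} (hε : 0 ≤ ε) (N : ℕ → ℕ) (h sz : ℕ) :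
    quadPotential B ε (binUpdate N h sz) ≤
      quadPotential B ε N + ε * (partialCount B N (h + sz) - partialCount B N h) + ε := by
  have hsum : ∑ k ∈ Finset.Icc 1 (B - 1), ((binUpdate N h sz k : ℕ) : ℝ) ^ 2 ≤
      ∑ k ∈ Finset.Icc 1 (B - 1), (N k : ℝ) ^ 2 +
        (2 * partialCount B N (h + sz) + 1) + (1 - 2 * partialCount B N h) := by
    refine (Finset.sum_le_sum fun k hk => binUpdate_sq_le N h sz k (Finset.mem_Icc.1 hk).1).trans ?_
    simp only [Finset.sum_add_distrib, Finset.sum_ite_eq', partialCount]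
    split_ifs <;> linarith
  have := mul_le_mul_of_nonneg_left hsum (by positivity : 0 ≤ ε / 2)
  unfold quadPotential
  linarith

lemma quadObj_le_linObj (B : ℕ) {ε : ℝ} (hε : 0 ≤ ε) (N : ℕ → ℕ) (sz h : ℕ) :
    quadObj B ε N sz h ≤ linObj B ε N sz h + quadPotential B ε N + ε := by
  have := quadPotential_binUpdate_le B hε N h sz
  unfold quadObj linObj placementCost
  unfold quadPotential at this ⊢
  linarith

lemma quadObj_le_dualPrice (B : ℕ) {ε : ℝ} (hε : 0 ≤ ε) (N : ℕ → ℕ) {sz h : ℕ}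
    (hstep : PDQuadStep B ε N sz h) :
    quadObj B ε N sz h ≤ dualPrice B ε N sz + quadPotential B ε N + ε := by
  obtain ⟨h₀, hh₀, hmin⟩ :=
    Finset.exists_mem_eq_inf' Finset.nonempty_range_add_one (linObj B ε N sz)
  calc quadObj B ε N sz h ≤ quadObj B ε N sz h₀ :=
        hstep.2 h₀ (Nat.lt_succ_iff.1 (Finset.mem_range.1 hh₀))
    _ ≤ linObj B ε N sz h₀ + quadPotential B ε N + ε := quadObj_le_linObj B hε N sz h₀
    _ = dualPrice B ε N sz + quadPotential B ε N + ε := by rw [dualPrice, hmin]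

lemma sum_placementCost_add_quadPotential_le (B : ℕ) {ε : ℝ} (hε : 0 ≤ ε) (sz place : ℕ → ℕ)
    (m : ℕ)
    (hrun : ∀ t < m, PDQuadStep B ε (binState sz place t) (sz t) (place t)) :
    ∑ t ∈ Finset.range m, placementCost B (sz t) (place t) +
        quadPotential B ε (binState sz place m) ≤
      ∑ t ∈ Finset.range m, dualPrice B ε (binState sz place t) (sz t) + m * ε := by
  induction m with
  | zero => simp [quadPotential, binState]
  | succ m ih =>
    have hstep := quadObj_le_dualPrice B hε _ (hrun m m.lt_succ_self)
    have ih := ih fun t ht => hrun t (ht.trans m.lt_succ_self)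
    have hnext : quadObj B ε (binState sz place m) (sz m) (place m) =
        placementCost B (sz m) (place m) + quadPotential B ε (binState sz place (m + 1)) := rfl
    simp only [Finset.sum_range_succ, Nat.cast_succ]
    linarith

lemma binState_full_eq_sum (B : ℕ) (sz place : ℕ → ℕ) (m : ℕ)
    (hfit : ∀ t < m, 1 ≤ sz t ∧ place t + sz t ≤ B) :
    (binState sz place m B : ℝ) = ∑ t ∈ Finset.range m, if place t = B - sz t then 1 else 0 := by
  induction m with
  | zero => simp [binState]
  | succ m ih =>
    obtain ⟨hsz, hfits⟩ := hfit m m.lt_succ_self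
    rw [Finset.sum_range_succ, ← ih fun t ht => hfit t (ht.trans m.lt_succ_self)]
    simp only [binState, binUpdate]
    split_ifs <;> first | omega | push_cast; ring

lemma algWaste_eq (B n : ℕ) (hB : 1 ≤ B) (sz place : ℕ → ℕ)
    (hfit : ∀ t < n, 1 ≤ sz t ∧ place t + sz t ≤ B) :
    algWaste B n sz place =
      ∑ t ∈ Finset.range n, placementCost B (sz t) (place t) +
        B * ∑ k ∈ Finset.Icc 1 (B - 1), (binState sz place n k : ℝ) := by
  have hsplit : Finset.Icc 1 B = insert B (Finset.Icc 1 (B - 1)) := by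
    ext k; simp only [Finset.mem_insert, Finset.mem_Icc]; omega
  rw [algWaste, hsplit, Finset.sum_insert (by simp; omega), binState_full_eq_sum B sz place n hfit]
  simp only [placementCost, Finset.sum_sub_distrib, ← Finset.mul_sum]
  ring

lemma mul_sum_sub_quadPotential_le (B : ℕ) (hB : 1 ≤ B) {ε : ℝ} (hε : 0 < ε) (N : ℕ → ℕ) :
    B * ∑ k ∈ Finset.Icc 1 (B - 1), (N k : ℝ) - quadPotential B ε N ≤
      ((B : ℝ) - 1) * (B ^ 2 / (2 * ε)) := by
  have hlevel : ∀ k ∈ Finset.Icc 1 (B - 1),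
      B * (N k : ℝ) - ε / 2 * (N k : ℝ) ^ 2 ≤ B ^ 2 / (2 * ε) := fun k _ => by
    rw [le_div_iff₀ (by positivity)]
    nlinarith [sq_nonneg (ε * N k - B)]
  have := Finset.sum_le_card_nsmul _ _ _ hlevel
  rw [Nat.card_Icc, nsmul_eq_mul, Nat.add_sub_cancel, Nat.cast_sub hB, Nat.cast_one] at this
  rw [quadPotential, Finset.mul_sum, Finset.mul_sum, ← Finset.sum_sub_distrib]
  exact this

lemma algWaste_le_sum_dualPrice (B n : ℕ) (hB : 1 ≤ B) {ε : ℝ} (hε : 0 < ε) (sz place : ℕ → ℕ)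
    (hsz : ∀ t < n, 1 ≤ sz t ∧ sz t ≤ B)
    (hrun : ∀ t < n, PDQuadStep B ε (binState sz place t) (sz t) (place t)) :
    algWaste B n sz place ≤ ∑ t ∈ Finset.range n, dualPrice B ε (binState sz place t) (sz t) +
      (n * ε + ((B : ℝ) - 1) * (B ^ 2 / (2 * ε))) := by
  have hfit : ∀ t < n, 1 ≤ sz t ∧ place t + sz t ≤ B := fun t ht => by
    have := (hrun t ht).1
    have := hsz t ht
    omega
  rw [algWaste_eq B n hB sz place hfit]
  linarith [sum_placementCost_add_quadPotential_le B hε.le sz place n hrun,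
    mul_sum_sub_quadPotential_le B hB hε (binState sz place n)]

lemma partialCount_self (B : ℕ) (N : ℕ → ℕ) : partialCount B N B = 0 :=
  if_neg fun hB => by simp only [Finset.mem_Icc] at hB; omega

lemma dualPrice_le_linObj (B : ℕ) (ε : ℝ) (N : ℕ → ℕ) {sz h : ℕ} (hh : h ≤ B - sz) :
    dualPrice B ε N sz ≤ linObj B ε N sz h :=
  Finset.inf'_le _ (Finset.mem_range.2 (Nat.lt_succ_of_le hh))

lemma sum_dualPrice_add_le {ι : Type*} (B : ℕ) {ε : ℝ} (hε : 0 ≤ ε) (N : ℕ → ℕ) (sz : ι → ℕ)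
    (T : Finset ι) (hsz : ∀ i ∈ T, 1 ≤ sz i) (hT : ∑ i ∈ T, sz i ≤ B) :
    ∑ i ∈ T, (dualPrice B ε N (sz i) + sz i) ≤ B := by
  suffices htele : ∑ i ∈ T, (dualPrice B ε N (sz i) + sz i) ≤
      (if 0 < ∑ i ∈ T, sz i then (B : ℝ) else 0) - ε * partialCount B N (B - ∑ i ∈ T, sz i) by
    have := mul_nonneg hε (partialCount_nonneg B N (B - ∑ i ∈ T, sz i))
    split_ifs at htele <;> linarith [(Nat.cast_nonneg B : (0 : ℝ) ≤ B)]
  induction T using Finset.cons_induction with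
  | empty => simp [partialCount_self]
  | cons a T haT ih =>
    simp only [Finset.sum_cons] at hT ⊢
    set S := ∑ i ∈ T, sz i
    have ha := hsz a (Finset.mem_cons_self a T)
    have ih := ih (fun i hi => hsz i (Finset.mem_cons_of_mem hi)) (by omega)
    -- item `a` sits directly below the items of `T`
    have hlin := dualPrice_le_linObj B ε N (sz := sz a) (h := B - (sz a + S)) (by omega)
    have hlevel : B - (sz a + S) + sz a = B - S := by omega
    rw [linObj, placementCost, hlevel] at hlin
    have hfull : (B : ℝ) * (if B - (sz a + S) = B - sz a then 1 else 0) +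
        (if 0 < S then (B : ℝ) else 0) = if 0 < sz a + S then (B : ℝ) else 0 := by
      split_ifs <;> first | omega | simp
    linarith

lemma sum_le_optWaste (B n : ℕ) (sz : ℕ → ℕ) (hsz : ∀ i < n, sz i ≤ B) (y : Fin n → ℝ)
    (hy : ∀ T : Finset (Fin n), ∑ i ∈ T, sz i ≤ B → ∑ i ∈ T, (y i + sz i) ≤ B) :
    ∑ i, y i ≤ optWaste B n sz := by
  -- `sInf ∅ = 0` in `ℕ`, so the infimum is shown attained via the one-item-per-bin packing
  have hpacking : ∃ f : Fin n → Fin n,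
      (∀ b : Fin n, ∑ i ∈ Finset.univ.filter (fun i => f i = b), sz i ≤ B) ∧
      B * n - ∑ i : Fin n, sz i + ∑ i : Fin n, sz i = B * (Finset.univ.image f).card := by
    refine ⟨id, fun b => by simpa [Finset.filter_eq'] using hsz b b.2, ?_⟩
    have : ∑ i : Fin n, sz i ≤ B * n := by
      simpa [mul_comm] using Finset.sum_le_card_nsmul Finset.univ (fun i : Fin n => sz i) B
        fun i _ => hsz i i.2
    simp [Nat.sub_add_cancel this]
  obtain ⟨f, hbins, hwaste⟩ : optWaste B n sz ∈ _ := Nat.sInf_mem ⟨_, hpacking⟩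
  have hcover : ∑ i, (y i + sz i) ≤ (Finset.univ.image f).card * (B : ℝ) :=
    calc ∑ i, (y i + sz i)
        = ∑ b ∈ Finset.univ.image f, ∑ i with f i = b, (y i + sz i) :=
          (Finset.sum_fiberwise_of_maps_to (fun i _ => Finset.mem_image_of_mem f (by simp)) _).symm
      _ ≤ ∑ _b ∈ Finset.univ.image f, (B : ℝ) := Finset.sum_le_sum fun b _ => hy _ (hbins b)
      _ = (Finset.univ.image f).card * (B : ℝ) := by simp
  have hwaste' : (optWaste B n sz : ℝ) + ∑ i : Fin n, (sz i : ℝ) =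
      B * (Finset.univ.image f).card := by exact_mod_cast hwaste
  rw [Finset.sum_add_distrib] at hcover
  linarith

lemma sum_dualPrice_le_optWaste (B n : ℕ) {ε : ℝ} (hε : 0 ≤ ε) (N : ℕ → ℕ) (sz : ℕ → ℕ)
    (hsz : ∀ i < n, 1 ≤ sz i ∧ sz i ≤ B) :
    ∑ i : Fin n, dualPrice B ε N (sz i) ≤ optWaste B n sz :=
  sum_le_optWaste B n sz (fun i hi => (hsz i hi).2) _ fun T hT =>
    sum_dualPrice_add_le B hε N (fun i : Fin n => sz i) T (fun i _ => (hsz i i.2).1) hT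

section iidExpect

variable {ι α : Type*} [Fintype ι] [DecidableEq ι] [Fintype α] (p : α → ℝ)

noncomputable def iidExpect (f : (ι → α) → ℝ) : ℝ :=
  ∑ σ, (∏ i, p (σ i)) * f σ

variable {p}

lemma iidExpect_mono (hp : ∀ a, 0 ≤ p a) {f g : (ι → α) → ℝ} (hfg : ∀ σ, f σ ≤ g σ) :
    iidExpect p f ≤ iidExpect p g :=
  Finset.sum_le_sum fun σ _ =>
    mul_le_mul_of_nonneg_left (hfg σ) (Finset.prod_nonneg fun i _ => hp (σ i))

lemma iidExpect_const (hp : ∑ a, p a = 1) (c : ℝ) : iidExpect p (fun _ : ι → α => c) = c := by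
  rw [iidExpect, ← Finset.sum_mul, ← Fintype.prod_sum, hp, Finset.prod_const_one, one_mul]

lemma iidExpect_add (f g : (ι → α) → ℝ) :
    iidExpect p (fun σ => f σ + g σ) = iidExpect p f + iidExpect p g := by
  simp only [iidExpect, mul_add, Finset.sum_add_distrib]

lemma iidExpect_sum {κ : Type*} (s : Finset κ) (f : κ → (ι → α) → ℝ) :
    iidExpect p (fun σ => ∑ k ∈ s, f k σ) = ∑ k ∈ s, iidExpect p (f k) := by
  simp only [iidExpect, Finset.mul_sum]
  exact Finset.sum_comm

lemma iidExpect_eval (hp : ∑ a, p a = 1) (i₀ : ι) (G : (ι → α) → α → ℝ)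
    (hG : ∀ σ τ, (∀ i ≠ i₀, σ i = τ i) → G σ = G τ) :
    iidExpect p (fun σ => G σ (σ i₀)) = iidExpect p (fun σ => ∑ a, p a * G σ a) := by
  have hweight : ∀ σ a, (∏ i, p (Function.update σ i₀ a i)) * p (σ i₀) = (∏ i, p (σ i)) * p a := by
    intro σ a
    rw [Fintype.prod_eq_mul_prod_compl i₀, Fintype.prod_eq_mul_prod_compl i₀ (fun i => p (σ i)),
      Function.update_self, Finset.prod_congr rfl fun i hi =>
        by rw [Function.update_of_ne (by simpa using hi)]]
    ring
  have hG' : ∀ σ a, G (Function.update σ i₀ a) = G σ := fun σ a =>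
    hG _ _ fun i hi => Function.update_of_ne hi a σ
  -- exchanging `σ i₀` with an independent copy `a` preserves the weight `p a * ∏ i, p (σ i)`
  let e : (ι → α) × α ≃ (ι → α) × α := Function.Involutive.toPerm
    (fun x => (Function.update x.1 i₀ x.2, x.1 i₀)) fun x => by simp
  calc iidExpect p (fun σ => G σ (σ i₀))
      = ∑ x : (ι → α) × α, p x.2 * ((∏ i, p (x.1 i)) * G x.1 (x.1 i₀)) := by
        simp only [iidExpect, Fintype.sum_prod_type, ← Finset.sum_mul, hp, one_mul]
    _ = ∑ x : (ι → α) × α, p (e x).2 * ((∏ i, p ((e x).1 i)) * G (e x).1 ((e x).1 i₀)) :=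
        (e.sum_comp _).symm
    _ = ∑ x : (ι → α) × α, p x.2 * ((∏ i, p (x.1 i)) * G x.1 x.2) := by
        refine Fintype.sum_congr _ _ fun x => ?_
        simp only [e, Function.Involutive.toPerm, Equiv.coe_fn_mk, Function.update_self, hG']
        linear_combination G x.1 x.2 * hweight x.1 x.2
    _ = iidExpect p (fun σ => ∑ a, p a * G σ a) := by
        simp only [iidExpect, Fintype.sum_prod_type, Finset.mul_sum]
        exact Fintype.sum_congr _ _ fun σ => Fintype.sum_congr _ _ fun a => by ring

end iidExpect

section Model

variable {B J n : ℕ} {s : Fin J → ℕ} {p : Fin J → ℝ}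

lemma seqSizes_of_lt (σ : Fin n → Fin J) {t : ℕ} (ht : t < n) :
    seqSizes n s σ t = s (σ ⟨t, ht⟩) :=
  dif_pos ht

def Nonanticipating (place : (Fin n → Fin J) → ℕ → ℕ) : Prop :=
  ∀ σ τ : Fin n → Fin J, ∀ t : ℕ, (∀ i : Fin n, (i : ℕ) ≤ t → σ i = τ i) → place σ t = place τ t

lemma binState_seqSizes_congr {place : (Fin n → Fin J) → ℕ → ℕ}
    (hadapted : Nonanticipating place) {σ τ : Fin n → Fin J} {t : ℕ} (hστ : ∀ i : Fin n, (i : ℕ) < t → σ i = τ i) :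
    binState (seqSizes n s σ) (place σ) t = binState (seqSizes n s τ) (place τ) t := by
  induction t with
  | zero => rfl
  | succ t ih =>
    have hsz : seqSizes n s σ t = seqSizes n s τ t := by
      by_cases ht : t < n
      · rw [seqSizes_of_lt σ ht, seqSizes_of_lt τ ht, hστ _ t.lt_succ_self]
      · simp only [seqSizes, dif_neg ht]
    simp only [binState, ih fun i hi => hστ i (hi.trans t.lt_succ_self), hsz,
      hadapted σ τ t fun i hi => hστ i (Nat.lt_succ_of_le hi)]

lemma mul_sum_dualPrice_le_iidExpect_optWaste (hs : ∀ j, 1 ≤ s j ∧ s j ≤ B)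
    (hp_nonneg : ∀ j, 0 ≤ p j) (hp_sum : ∑ j, p j = 1) {ε : ℝ} (hε : 0 ≤ ε) (N : ℕ → ℕ) :
    n * ∑ j, p j * dualPrice B ε N (s j) ≤
      iidExpect p (fun σ : Fin n → Fin J => (optWaste B n (seqSizes n s σ) : ℝ)) := by
  have hprice : ∀ i : Fin n, iidExpect p (fun σ => dualPrice B ε N (s (σ i))) =
      ∑ j, p j * dualPrice B ε N (s j) := fun i => by
    rw [iidExpect_eval hp_sum i (fun _ j => dualPrice B ε N (s j)) fun _ _ _ => rfl,
      iidExpect_const hp_sum]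
  calc n * ∑ j, p j * dualPrice B ε N (s j)
      = iidExpect p (fun σ : Fin n → Fin J => ∑ i : Fin n, dualPrice B ε N (s (σ i))) := by
        simp [iidExpect_sum, hprice]
    _ ≤ _ := iidExpect_mono hp_nonneg fun σ => by
        have := sum_dualPrice_le_optWaste B n hε N (seqSizes n s σ) fun t ht => by
          rw [seqSizes_of_lt σ ht]; exact hs _
        convert this using 3 with i
        rw [seqSizes_of_lt σ i.2]

lemma iidExpect_sum_dualPrice_le_iidExpect_optWaste (hn : 0 < n) (hs : ∀ j, 1 ≤ s j ∧ s j ≤ B)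
    (hp_nonneg : ∀ j, 0 ≤ p j) (hp_sum : ∑ j, p j = 1) {place : (Fin n → Fin J) → ℕ → ℕ}
    (hadapted : Nonanticipating place) {ε : ℝ} (hε : 0 ≤ ε) :
    iidExpect p (fun σ => ∑ t ∈ Finset.range n,
        dualPrice B ε (binState (seqSizes n s σ) (place σ) t) (seqSizes n s σ t)) ≤
      iidExpect p (fun σ : Fin n → Fin J => (optWaste B n (seqSizes n s σ) : ℝ)) := by
  set opt := iidExpect p (fun σ : Fin n → Fin J => (optWaste B n (seqSizes n s σ) : ℝ))
  have hn' : (0 : ℝ) < n := Nat.cast_pos.2 hn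
  -- the state before item `t` is independent of the size of item `t`
  have hstep : ∀ t ∈ Finset.range n, iidExpect p (fun σ =>
      dualPrice B ε (binState (seqSizes n s σ) (place σ) t) (seqSizes n s σ t)) ≤ opt / n := by
    intro t ht
    have ht := Finset.mem_range.1 ht
    simp only [seqSizes_of_lt _ ht]
    rw [iidExpect_eval hp_sum ⟨t, ht⟩
      (fun σ j => dualPrice B ε (binState (seqSizes n s σ) (place σ) t) (s j))
      fun σ τ hστ => by rw [binState_seqSizes_congr hadapted fun i hi => hστ i (Fin.ne_of_lt hi)]]
    calc _ ≤ iidExpect p (fun _ => opt / n) := iidExpect_mono hp_nonneg fun σ =>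
          (le_div_iff₀' hn').2 (mul_sum_dualPrice_le_iidExpect_optWaste hs hp_nonneg hp_sum hε _)
      _ = opt / n := iidExpect_const hp_sum _
  calc _ = ∑ t ∈ Finset.range n, iidExpect p (fun σ =>
          dualPrice B ε (binState (seqSizes n s σ) (place σ) t) (seqSizes n s σ t)) :=
        iidExpect_sum _ _
    _ ≤ ∑ _t ∈ Finset.range n, opt / n := Finset.sum_le_sum hstep
    _ = opt := by rw [Finset.sum_const, Finset.card_range, nsmul_eq_mul, mul_div_cancel₀ _ hn'.ne']

end Model

lemma pdQuad_error_le (B n : ℕ) (hB : 1 ≤ B) (hn : 1 ≤ n) :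
    n * (B ^ 2 / √(2 * n)) + ((B : ℝ) - 1) * (B ^ 2 / (2 * (B ^ 2 / √(2 * n)))) ≤
      √(2 * (B : ℝ) ^ 4 * n) := by
  have hB' : (0 : ℝ) < B := Nat.cast_pos.2 hB
  have hr : 0 < √(2 * (n : ℝ)) := Real.sqrt_pos.2 (by positivity)
  have hr2 : √(2 * (n : ℝ)) ^ 2 = 2 * n := Real.sq_sqrt (by positivity)
  have hrhs : √(2 * (B : ℝ) ^ 4 * n) = B ^ 2 * √(2 * n) := by
    rw [show 2 * (B : ℝ) ^ 4 * n = (B ^ 2) ^ 2 * (2 * n) by ring, Real.sqrt_mul (by positivity),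
      Real.sqrt_sq (by positivity)]
  rw [hrhs]
  generalize √(2 * (n : ℝ)) = r at hr hr2
  field_simp
  rw [hr2]
  nlinarith [sq_nonneg ((B : ℝ) - 1), (Nat.one_le_cast.2 hn : (1 : ℝ) ≤ n)]

theorem pd_quad_fixed_epsilon_general (B J n : ℕ) (hB : 1 ≤ B) (hn : 1 ≤ n)
    (s : Fin J → ℕ) (hs_pos : ∀ j, 0 < s j)
    (hs_lt : ∀ j, s j < B)
    (p : Fin J → ℝ) (hp_nonneg : ∀ j, 0 ≤ p j) (hp_sum : ∑ j, p j = 1)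
    (place : (Fin n → Fin J) → ℕ → ℕ)
    (hadapted : ∀ σ τ : Fin n → Fin J, ∀ t : ℕ,
      (∀ i : Fin n, (i : ℕ) ≤ t → σ i = τ i) → place σ t = place τ t)
    (hrun : ∀ σ : Fin n → Fin J, ∀ t < n,
      PDQuadStep B ((B : ℝ) ^ 2 / Real.sqrt (2 * (n : ℝ)))
        (binState (seqSizes n s σ) (place σ) t) (seqSizes n s σ t) (place σ t)) :
    ∑ σ : Fin n → Fin J, (∏ i, p (σ i)) * algWaste B n (seqSizes n s σ) (place σ)
      ≤ (∑ σ : Fin n → Fin J, (∏ i, p (σ i)) * (optWaste B n (seqSizes n s σ) : ℝ))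
        + Real.sqrt (2 * (B : ℝ) ^ 4 * (n : ℝ)) := by
  set ε := (B : ℝ) ^ 2 / √(2 * n)
  have hε : 0 < ε := div_pos (by positivity) (Real.sqrt_pos.2 (by positivity))
  have hs : ∀ j, 1 ≤ s j ∧ s j ≤ B := fun j => ⟨hs_pos j, (hs_lt j).le⟩
  calc _ ≤ iidExpect p (fun σ => ∑ t ∈ Finset.range n,
          dualPrice B ε (binState (seqSizes n s σ) (place σ) t) (seqSizes n s σ t) +
            (n * ε + ((B : ℝ) - 1) * (B ^ 2 / (2 * ε)))) :=
        iidExpect_mono hp_nonneg fun σ => algWaste_le_sum_dualPrice B n hB hε _ _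
          (fun t ht => by rw [seqSizes_of_lt σ ht]; exact hs _) (hrun σ)
    _ ≤ iidExpect p (fun σ : Fin n → Fin J => (optWaste B n (seqSizes n s σ) : ℝ)) +
          (n * ε + ((B : ℝ) - 1) * (B ^ 2 / (2 * ε))) := by
        rw [iidExpect_add, iidExpect_const hp_sum]
        exact add_le_add_left (iidExpect_sum_dualPrice_le_iidExpect_optWaste (by omega) hs
          hp_nonneg hp_sum hadapted hε.le) _
    _ ≤ _ := add_le_add_right (pdQuad_error_le B n hB hn) _

/-- **Theorem 1 (PD-quad with fixed `ε`).**
Items of integer sizes `0 < s 1 < ⋯ < s J < B` arrive i.i.d. with probabilities `p j`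
and are packed online into bins of integer capacity `B` by the PD-quad algorithm run
with the constant parameter `ε(t) = B²/√(2n)` (online: the placement at step `t` may
depend only on the items seen so far, ties broken arbitrarily).  Then for every `n ≥ 1`,
`E[W^{PD-quad}(n)] ≤ E[W^{OPT}(n)] + √(2·B⁴·n)`, where the expectation is over the
i.i.d. item sequence and `W^{OPT}` is the offline optimal waste of the realized items. -/
theorem pd_quad_fixed_epsilon (B J n : ℕ) (hB : 1 ≤ B) (hJ : 1 ≤ J) (hn : 1 ≤ n)
    (s : Fin J → ℕ) (hs_pos : ∀ j, 0 < s j) (hs_mono : StrictMono s)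
    (hs_lt : ∀ j, s j < B)
    (p : Fin J → ℝ) (hp_nonneg : ∀ j, 0 ≤ p j) (hp_sum : ∑ j, p j = 1)
    (place : (Fin n → Fin J) → ℕ → ℕ)
    (hadapted : ∀ σ τ : Fin n → Fin J, ∀ t : ℕ,
      (∀ i : Fin n, (i : ℕ) ≤ t → σ i = τ i) → place σ t = place τ t)
    (hrun : ∀ σ : Fin n → Fin J, ∀ t < n,
      PDQuadStep B ((B : ℝ) ^ 2 / Real.sqrt (2 * (n : ℝ)))
        (binState (seqSizes n s σ) (place σ) t) (seqSizes n s σ t) (place σ t)) :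
    ∑ σ : Fin n → Fin J, (∏ i, p (σ i)) * algWaste B n (seqSizes n s σ) (place σ)
      ≤ (∑ σ : Fin n → Fin J, (∏ i, p (σ i)) * (optWaste B n (seqSizes n s σ) : ℝ))
        + Real.sqrt (2 * (B : ℝ) ^ 4 * (n : ℝ)) :=
  pd_quad_fixed_epsilon_general B J n hB hn s hs_pos hs_lt p hp_nonneg hp_sum place hadapted hrun
end

section
/- Under the PD-exp algorithm run with the time-varying parameter ε(t) = √(B/(2(B+t))), for every item-size distribution F and every n ≥ 1, the expected waste after packing n items satisfies E[W^{PD-exp}(n)] ≤ E[W^{OPT}(n)] + √(8·B³·(n+B)), where the expectation is over the i.i.d. item sequence. -/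
namespace PDExp

open Real Finset Function

/-! ### The exponential potential -/

section Potential

noncomputable def potential (B : ℕ) (ε : ℝ) (N : ℕ → ℕ) : ℝ :=
  (B : ℝ) / ε * ∑ h ∈ Icc 1 (B - 1), exp (-ε * (N h : ℝ))

noncomputable def levelWeight (B : ℕ) (ε : ℝ) (k : ℕ) : ℝ :=
  (B : ℝ) / ε * (1 - exp (-ε)) * exp (-ε * (k : ℝ))

variable {B : ℕ} {ε : ℝ} {N : ℕ → ℕ}

lemma expObj_eq_add_potential (B : ℕ) (ε : ℝ) (N : ℕ → ℕ) (sz h : ℕ) :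
    expObj B ε N sz h =
      B * (if h = 0 then 1 else 0) - sz + potential B ε (binUpdate N h sz) := rfl

lemma potential_nonneg (hε : 0 ≤ ε) (N : ℕ → ℕ) : 0 ≤ potential B ε N := by
  unfold potential
  positivity

lemma potential_zero (B : ℕ) (ε : ℝ) : potential B ε (fun _ => 0) = B * (B - 1 : ℕ) / ε := by
  simp [potential, div_mul_eq_mul_div]

lemma levelWeight_nonneg (hε : 0 ≤ ε) (k : ℕ) : 0 ≤ levelWeight B ε k := by
  have : exp (-ε) ≤ 1 := exp_le_one_iff.2 (by linarith)
  unfold levelWeight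
  positivity

lemma potential_update_of_mem {l : ℕ} (hl : l ∈ Icc 1 (B - 1)) (v : ℕ) :
    potential B ε (update N l v) =
      potential B ε N + B / ε * (exp (-ε * v) - exp (-ε * N l)) := by
  have hsum : ∀ h ∈ Icc 1 (B - 1), exp (-ε * (update N l v h : ℝ)) =
      exp (-ε * N h) + if h = l then exp (-ε * v) - exp (-ε * N l) else 0 := by
    intro h _
    rcases eq_or_ne h l with rfl | hne
    · simp
    · simp [hne]
  simp only [potential, sum_congr rfl hsum, sum_add_distrib, sum_ite_eq', hl, if_true]
  ring

lemma potential_update_of_notMem {l : ℕ} (hl : l ∉ Icc 1 (B - 1)) (v : ℕ) :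
    potential B ε (update N l v) = potential B ε N := by
  unfold potential
  congr 1
  refine sum_congr rfl fun h hh => ?_
  rw [update_of_ne (ne_of_mem_of_not_mem hh hl)]

lemma potential_update_succ {l : ℕ} (hl : l ∈ Icc 1 (B - 1)) :
    potential B ε (update N l (N l + 1)) = potential B ε N - levelWeight B ε (N l) := by
  rw [potential_update_of_mem hl, levelWeight]
  push_cast
  rw [mul_add, mul_one, exp_add]
  ring

lemma potential_update_succ_le (hε : 0 ≤ ε) (l : ℕ) :
    potential B ε (update N l (N l + 1)) ≤ potential B ε N := by
  by_cases hl : l ∈ Icc 1 (B - 1)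
  · rw [potential_update_succ hl]
    linarith [levelWeight_nonneg (B := B) hε (N l)]
  · rw [potential_update_of_notMem hl]

lemma potential_update_pred {l : ℕ} (hl : l ∈ Icc 1 (B - 1)) (hN : 1 ≤ N l) :
    potential B ε (update N l (N l - 1)) = potential B ε N + exp ε * levelWeight B ε (N l) := by
  rw [potential_update_of_mem hl, levelWeight, Nat.cast_sub hN, Nat.cast_one,
    show -ε * ((N l : ℝ) - 1) = ε + -ε * N l by ring, exp_add]
  have hinv : exp ε * exp (-ε) = 1 := by rw [← exp_add, add_neg_cancel, exp_zero]
  linear_combination (B / ε * exp (-ε * N l)) * hinv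

lemma binUpdate_zero (N : ℕ → ℕ) (sz : ℕ) : binUpdate N 0 sz = update N sz (N sz + 1) := by
  ext x
  rcases eq_or_ne x sz with rfl | hne <;> simp [binUpdate, *]

lemma binUpdate_of_pos {h sz : ℕ} (hh : 1 ≤ h) (hsz : 1 ≤ sz) :
    binUpdate N h sz = update (update N h (N h - 1)) (h + sz) (N (h + sz) + 1) := by
  ext x
  by_cases hx : x = h + sz
  · subst hx
    simp [binUpdate, show sz ≠ 0 by omega]
  · by_cases hx' : x = h
    · subst hx'
      simp [binUpdate, hh, show sz ≠ 0 by omega]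
    · simp [binUpdate, hx, hx']

variable {h sz : ℕ}

lemma potential_binUpdate_zero (hsz : sz ∈ Icc 1 (B - 1)) :
    potential B ε (binUpdate N 0 sz) = potential B ε N - levelWeight B ε (N sz) := by
  rw [binUpdate_zero, potential_update_succ hsz]

lemma potential_binUpdate_le (hε : 0 ≤ ε) (hh : 1 ≤ h) (hsz : 1 ≤ sz) (hfit : h + sz ≤ B)
    (hN : 1 ≤ N h) :
    potential B ε (binUpdate N h sz) ≤ potential B ε N + exp ε * levelWeight B ε (N h) := by
  rw [binUpdate_of_pos hh hsz, ← potential_update_pred (mem_Icc.2 ⟨hh, by omega⟩) hN]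
  have := potential_update_succ_le (B := B) (N := update N h (N h - 1)) hε (h + sz)
  rwa [update_of_ne (by omega : h + sz ≠ h)] at this

lemma potential_binUpdate_of_lt (hh : 1 ≤ h) (hsz : 1 ≤ sz) (hfit : h + sz ≤ B - 1)
    (hN : 1 ≤ N h) :
    potential B ε (binUpdate N h sz) =
      potential B ε N + exp ε * levelWeight B ε (N h) - levelWeight B ε (N (h + sz)) := by
  have hsucc := potential_update_succ (ε := ε) (N := update N h (N h - 1))
    (mem_Icc.2 ⟨by omega, hfit⟩ : h + sz ∈ Icc 1 (B - 1))
  rw [update_of_ne (by omega : h + sz ≠ h)] at hsucc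
  rw [binUpdate_of_pos hh hsz, hsucc, potential_update_pred (mem_Icc.2 ⟨hh, by omega⟩) hN]

def feasibleLevels (B : ℕ) (N : ℕ → ℕ) (sz : ℕ) : Finset ℕ :=
  insert 0 ((Icc 1 (B - sz)).filter fun h => 0 < N h)

lemma mem_feasibleLevels : h ∈ feasibleLevels B N sz ↔ expFeasible B N sz h := by
  simp [feasibleLevels, expFeasible, and_assoc]

noncomputable def minObj (B : ℕ) (ε : ℝ) (N : ℕ → ℕ) (sz : ℕ) : ℝ :=
  (feasibleLevels B N sz).inf' (insert_nonempty _ _) (expObj B ε N sz)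

lemma minObj_le (hh : expFeasible B N sz h) : minObj B ε N sz ≤ expObj B ε N sz h :=
  inf'_le _ (mem_feasibleLevels.2 hh)

lemma expObj_eq_minObj (hstep : PDExpStep B ε N sz h) :
    expObj B ε N sz h = minObj B ε N sz :=
  le_antisymm (le_inf' _ _ fun _ hh' => hstep.2 _ (mem_feasibleLevels.1 hh')) (minObj_le hstep.1)

lemma minObj_le_open (hsz : sz ∈ Icc 1 (B - 1)) :
    minObj B ε N sz ≤ B - sz + potential B ε N - levelWeight B ε (N sz) := by
  have := minObj_le (ε := ε) (Or.inl rfl : expFeasible B N sz 0)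
  rw [expObj_eq_add_potential, if_pos rfl, potential_binUpdate_zero hsz] at this
  linarith

lemma minObj_le_fill (hε : 0 ≤ ε) (hh : 1 ≤ h) (hsz : 1 ≤ sz) (hfit : h + sz ≤ B)
    (hN : 1 ≤ N h) :
    minObj B ε N sz ≤ -sz + potential B ε N + exp ε * levelWeight B ε (N h) := by
  have := minObj_le (ε := ε) (Or.inr ⟨hh, by omega, hN⟩ : expFeasible B N sz h)
  rw [expObj_eq_add_potential, if_neg (by omega)] at this
  linarith [potential_binUpdate_le hε hh hsz hfit hN]

lemma minObj_le_fill_of_lt (hh : 1 ≤ h) (hsz : 1 ≤ sz) (hfit : h + sz ≤ B - 1)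
    (hN : 1 ≤ N h) :
    minObj B ε N sz ≤
      -sz + potential B ε N + exp ε * levelWeight B ε (N h) - levelWeight B ε (N (h + sz)) := by
  have := minObj_le (ε := ε) (Or.inr ⟨hh, by omega, hN⟩ : expFeasible B N sz h)
  rw [expObj_eq_add_potential, if_neg (by omega), potential_binUpdate_of_lt hh hsz hfit hN] at this
  linarith

lemma le_levelWeight_zero_add (hε : 0 < ε) :
    (B : ℝ) ≤ levelWeight B ε 0 + B * (1 - exp (-ε)) := by
  have hexp : (1 + ε) * exp (-ε) ≤ 1 := by
    rw [exp_neg, ← div_eq_mul_inv, div_le_one (exp_pos ε)]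
    linarith [add_one_le_exp ε]
  have key : ε ≤ (1 - exp (-ε)) * (1 + ε) := by linarith
  rw [levelWeight, Nat.cast_zero, mul_zero, exp_zero, mul_one,
    show (B : ℝ) / ε * (1 - exp (-ε)) + B * (1 - exp (-ε)) =
      B * ((1 - exp (-ε)) * (1 + ε)) / ε by field_simp, le_div_iff₀ hε]
  exact mul_le_mul_of_nonneg_left key (Nat.cast_nonneg B)

lemma exp_mul_levelWeight_le (hε : 0 < ε) {k : ℕ} (hk : 1 ≤ k) :
    exp ε * levelWeight B ε k ≤ levelWeight B ε k + B * (1 - exp (-ε)) := by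
  set q := 1 - exp (-ε)
  have hq0 : 0 ≤ q := by linarith [exp_le_one_iff.2 (neg_nonpos.2 hε.le)]
  have hqε : q / ε ≤ 1 := (div_le_one hε).2 (by linarith [add_one_le_exp (-ε)])
  have hk' : exp (-ε * k) ≤ exp (-ε) :=
    exp_le_exp.2 (by nlinarith [(show (1 : ℝ) ≤ k by exact_mod_cast hk)])
  have hinv : exp ε * exp (-ε) = 1 := by rw [← exp_add, add_neg_cancel, exp_zero]
  have hgrowth : (exp ε - 1) * exp (-ε * k) ≤ q :=
    calc (exp ε - 1) * exp (-ε * k) ≤ (exp ε - 1) * exp (-ε) :=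
          mul_le_mul_of_nonneg_left hk' (by linarith [add_one_le_exp ε])
      _ = q := by linear_combination hinv
  calc exp ε * levelWeight B ε k
      = levelWeight B ε k + B / ε * q * ((exp ε - 1) * exp (-ε * k)) := by
        unfold levelWeight; ring
    _ ≤ levelWeight B ε k + B / ε * q * q := by gcongr
    _ = levelWeight B ε k + B * q * (q / ε) := by ring
    _ ≤ levelWeight B ε k + B * q * 1 := by gcongr
    _ = levelWeight B ε k + B * q := by ring

lemma exp_neg_mul_sub_one_div_le (m : ℝ) {ε' ε : ℝ} (hε' : 0 < ε') (hε : ε' ≤ ε) :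
    (exp (-ε' * m) - 1) / ε' ≤ (exp (-ε * m) - 1) / ε := by
  have hconv : ConvexOn ℝ Set.univ fun x => exp (-x * m) := by
    simpa [comp_def] using convexOn_exp.comp_linearMap (LinearMap.mulRight ℝ (-m))
  simpa using hconv.secant_mono (a := 0) trivial trivial trivial hε'.ne' (by linarith) hε

lemma potential_sub_eq_sum (B : ℕ) (ε : ℝ) (N : ℕ → ℕ) :
    potential B ε N - B * (B - 1 : ℕ) / ε =
      ∑ h ∈ Icc 1 (B - 1), B * ((exp (-ε * N h) - 1) / ε) := by
  rw [potential, show ((B - 1 : ℕ) : ℝ) = ∑ _h ∈ Icc 1 (B - 1), (1 : ℝ) by simp, mul_sum,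
    mul_sum, sum_div, ← sum_sub_distrib]
  exact sum_congr rfl fun h _ => by ring

/-- A smaller `ε` makes the potential larger, but by no more than the potential of the
empty configuration grows. -/
lemma potential_sub_le {ε' ε : ℝ} (hε' : 0 < ε') (hε : ε' ≤ ε) :
    potential B ε' N - B * (B - 1 : ℕ) / ε' ≤ potential B ε N - B * (B - 1 : ℕ) / ε := by
  rw [potential_sub_eq_sum, potential_sub_eq_sum]
  exact sum_le_sum fun h _ =>
    mul_le_mul_of_nonneg_left (exp_neg_mul_sub_one_div_le _ hε' hε) (Nat.cast_nonneg B)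

end Potential

/-! ### Comparison with an offline packing -/

section Packing

variable {B : ℕ} {ε : ℝ} {N : ℕ → ℕ} {ι β : Type*} [DecidableEq ι]

/-- Induction along an offline bin filled up to level `l`: when no bin of level `l` exists the
next item is compared with opening a new bin (`levelWeight B ε 0` pays the difference), otherwise
with filling a bin of level `l`; the new level is handed on to the remaining items. -/
lemma sum_minObj_le_levelWeight (hε : 0 < ε) {a : ι → ℕ} {I : Finset ι}
    (ha : ∀ i ∈ I, a i ∈ Icc 1 (B - 1)) {l : ℕ} (hl : 1 ≤ l) (hfit : l + ∑ i ∈ I, a i ≤ B) :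
    ∑ i ∈ I, (minObj B ε N (a i) + a i - potential B ε N) ≤
      levelWeight B ε (N l) + #I * (B * (1 - exp (-ε))) := by
  induction I using Finset.induction_on generalizing l with
  | empty => simpa using levelWeight_nonneg hε.le (N l)
  | insert x I hx ih =>
    rw [sum_insert hx] at hfit ⊢
    rw [card_insert_of_notMem hx, Nat.cast_succ]
    have hax := ha x (mem_insert_self x I)
    have hax1 : 1 ≤ a x := (mem_Icc.1 hax).1
    have ha' : ∀ i ∈ I, a i ∈ Icc 1 (B - 1) := fun i hi => ha i (mem_insert_of_mem hi)
    rcases Nat.eq_zero_or_pos (N l) with hN | hN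
    · have hopen := minObj_le_open (ε := ε) (N := N) hax
      have hrest := ih ha' (l := a x) hax1 (by omega)
      have hpay := le_levelWeight_zero_add (B := B) hε
      rw [hN]
      linarith
    · have hgrow := exp_mul_levelWeight_le (B := B) hε hN
      by_cases hlt : l + a x ≤ B - 1
      · have hfill := minObj_le_fill_of_lt (ε := ε) hl hax1 hlt hN
        have hrest := ih ha' (l := l + a x) (by omega) (by omega)
        linarith
      · have hI : I = ∅ := eq_empty_of_forall_notMem fun i hi => by
          have := single_le_sum (fun j _ => Nat.zero_le (a j)) hi
          have := (mem_Icc.1 (ha' i hi)).1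
          omega
        subst hI
        have hfill := minObj_le_fill (B := B) hε.le hl hax1 (by simpa using hfit) hN
        simp only [sum_empty, card_empty, Nat.cast_zero, zero_add, one_mul, add_zero]
        linarith

lemma sum_minObj_le_of_sum_le (hε : 0 < ε) {a : ι → ℕ} {I : Finset ι} (hI : I.Nonempty)
    (ha : ∀ i ∈ I, a i ∈ Icc 1 (B - 1)) (hfit : ∑ i ∈ I, a i ≤ B) :
    ∑ i ∈ I, (minObj B ε N (a i) + a i - potential B ε N) ≤
      B + #I * (B * (1 - exp (-ε))) := by
  obtain ⟨x, hx⟩ := hI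
  rw [← insert_erase hx, sum_insert (notMem_erase x I)] at hfit ⊢
  rw [card_insert_of_notMem (notMem_erase x I), Nat.cast_succ]
  have hax := ha x hx
  have hopen := minObj_le_open (ε := ε) (N := N) hax
  have hrest := sum_minObj_le_levelWeight (N := N) hε
    (fun i hi => ha i (mem_of_mem_erase hi)) (mem_Icc.1 hax).1 hfit
  have hD : 0 ≤ (B : ℝ) * (1 - exp (-ε)) :=
    mul_nonneg (Nat.cast_nonneg B) (by linarith [exp_le_one_iff.2 (neg_nonpos.2 hε.le)])
  linarith

lemma sum_minObj_le_packing [Fintype ι] [DecidableEq β] (hε : 0 < ε) {a : ι → ℕ}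
    (ha : ∀ i, a i ∈ Icc 1 (B - 1)) (f : ι → β) (hf : ∀ b, ∑ i with f i = b, a i ≤ B) :
    ∑ i, (minObj B ε N (a i) + a i - potential B ε N) ≤
      B * #(univ.image f) + Fintype.card ι * (B * (1 - exp (-ε))) := by
  have hmaps : ∀ i ∈ (univ : Finset ι), f i ∈ univ.image f := fun i _ =>
    mem_image_of_mem f (mem_univ i)
  rw [← sum_fiberwise_of_maps_to hmaps, ← card_univ, card_eq_sum_card_fiberwise hmaps]
  refine (sum_le_sum (g := fun b => (B : ℝ) + #{i | f i = b} * (B * (1 - exp (-ε))))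
    fun b hb => ?_).trans (le_of_eq ?_)
  · obtain ⟨i, -, rfl⟩ := mem_image.1 hb
    exact sum_minObj_le_of_sum_le hε ⟨i, by simp⟩ (fun i _ => ha i) (hf (f i))
  · rw [sum_add_distrib, sum_const, nsmul_eq_mul, ← sum_mul]
    push_cast
    ring

lemma exists_packing_of_optWaste {n : ℕ} {sz : ℕ → ℕ} (hsz : ∀ i < n, sz i ≤ B) :
    ∃ f : Fin n → Fin n, (∀ b, ∑ i with f i = b, sz i ≤ B) ∧
      optWaste B n sz + ∑ i : Fin n, sz i = B * #(univ.image f) := by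
  refine Nat.sInf_mem (s := {w | ∃ f : Fin n → Fin n, (∀ b, ∑ i with f i = b, sz i ≤ B) ∧
    w + ∑ i : Fin n, sz i = B * #(univ.image f)}) ?_
  refine ⟨B * n - ∑ i : Fin n, sz i, id, fun b => ?_, ?_⟩
  · simpa [filter_eq'] using hsz b b.isLt
  · have : ∑ i : Fin n, sz i ≤ B * n := by
      simpa [mul_comm] using sum_le_card_nsmul univ (fun i : Fin n => sz i) B
        fun i _ => hsz i i.isLt
    simp [Nat.sub_add_cancel this]

lemma sum_minObj_sub_potential_le_optWaste (hε : 0 < ε) {n : ℕ} {sz : ℕ → ℕ}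
    (hsz : ∀ i < n, sz i ∈ Icc 1 (B - 1)) :
    ∑ i : Fin n, (minObj B ε N (sz i) - potential B ε N) ≤
      optWaste B n sz + n * (B * (1 - exp (-ε))) := by
  obtain ⟨f, hf, hopt⟩ := exists_packing_of_optWaste fun i hi =>
    (mem_Icc.1 (hsz i hi)).2.trans (Nat.sub_le B 1)
  have hpack := sum_minObj_le_packing (N := N) hε (a := fun i : Fin n => sz i)
    (fun i => hsz i i.isLt) f hf
  have hopt' : (optWaste B n sz : ℝ) + ∑ i : Fin n, (sz i : ℝ) = B * #(univ.image f) := by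
    exact_mod_cast hopt
  simp only [sum_sub_distrib, sum_add_distrib, Fintype.card_fin] at hpack ⊢
  linarith

end Packing

/-! ### Runs of PD-exp -/

section Run

variable {B : ℕ} {N : ℕ → ℕ}

lemma sum_update_add_apply {ι M : Type*} [DecidableEq ι] [AddCommMonoid M] {s : Finset ι} {i : ι}
    (hi : i ∈ s) (f : ι → M) (v : M) :
    ∑ x ∈ s, update f i v x + f i = ∑ x ∈ s, f x + v := by
  rw [sum_update_of_mem hi, sum_eq_add_sum_sdiff_singleton_of_mem hi f]
  abel

variable {h sz : ℕ}

lemma sum_binUpdate (hsz : sz ∈ Icc 1 B) (hh : expFeasible B N sz h) :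
    ∑ l ∈ Icc 1 B, binUpdate N h sz l = ∑ l ∈ Icc 1 B, N l + if h = 0 then 1 else 0 := by
  obtain ⟨hsz1, hszB⟩ := mem_Icc.1 hsz
  rcases hh with rfl | ⟨hh1, hhB, hN⟩
  · have := sum_update_add_apply hsz N (N sz + 1)
    rw [binUpdate_zero, if_pos rfl]
    omega
  · have hdec := sum_update_add_apply (mem_Icc.2 ⟨hh1, by omega⟩ : h ∈ Icc 1 B) N (N h - 1)
    have hinc := sum_update_add_apply (mem_Icc.2 ⟨by omega, by omega⟩ : h + sz ∈ Icc 1 B)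
      (update N h (N h - 1)) (N (h + sz) + 1)
    rw [update_of_ne (by omega : h + sz ≠ h)] at hinc
    rw [binUpdate_of_pos hh1 hsz1, if_neg (by omega)]
    omega

variable {n : ℕ} {sz place : ℕ → ℕ}

lemma sum_binState (hsz : ∀ t < n, sz t ∈ Icc 1 B)
    (hfeas : ∀ t < n, expFeasible B (binState sz place t) (sz t) (place t)) :
    ∑ l ∈ Icc 1 B, binState sz place n l = ∑ t ∈ range n, if place t = 0 then 1 else 0 := by
  induction n with
  | zero => simp [binState]
  | succ n ih =>
    rw [sum_range_succ, ← ih (fun t ht => hsz t (by omega)) (fun t ht => hfeas t (by omega))]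
    exact sum_binUpdate (hsz n n.lt_succ_self) (hfeas n n.lt_succ_self)

lemma algWaste_eq_sum (hsz : ∀ t < n, sz t ∈ Icc 1 B)
    (hfeas : ∀ t < n, expFeasible B (binState sz place t) (sz t) (place t)) :
    algWaste B n sz place = ∑ t ∈ range n, (B * (if place t = 0 then 1 else 0 : ℝ) - sz t) := by
  rw [algWaste, sum_sub_distrib, ← mul_sum]
  congr 2
  exact_mod_cast sum_binState hsz hfeas

/-- The waste of step `t` is `minObj` minus the potential after the step; the potential terms
telescope once `potential_sub_le` absorbs the change from `ε t` to `ε (t + 1)`. -/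
theorem algWaste_le_of_run {ε : ℕ → ℝ} (hε : ∀ t, 0 < ε t) (hanti : Antitone ε)
    (hsz : ∀ t < n, sz t ∈ Icc 1 B)
    (hrun : ∀ t < n, PDExpStep B (ε t) (binState sz place t) (sz t) (place t)) :
    algWaste B n sz place ≤ B * (B - 1 : ℕ) / ε n + ∑ t ∈ range n,
      (minObj B (ε t) (binState sz place t) (sz t) - potential B (ε t) (binState sz place t)) := by
  set g : ℕ → ℝ := fun t =>
    minObj B (ε t) (binState sz place t) (sz t) - potential B (ε t) (binState sz place t)
  set a : ℕ → ℝ := fun t => potential B (ε t) (binState sz place t) - B * (B - 1 : ℕ) / ε t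
  have hstep : ∀ t < n,
      B * (if place t = 0 then 1 else 0 : ℝ) - sz t ≤ g t + (a t - a (t + 1)) := by
    intro t ht
    have hmin := expObj_eq_minObj (hrun t ht)
    have hshift := potential_sub_le (B := B) (N := binState sz place (t + 1)) (hε (t + 1))
      (hanti t.le_succ)
    rw [expObj_eq_add_potential] at hmin
    simp only [g, a]
    rw [binState] at hshift ⊢
    linarith
  have ha0 : a 0 = 0 := by simp [a, binState, potential_zero]
  have han := potential_nonneg (B := B) (hε n).le (binState sz place n)
  rw [algWaste_eq_sum hsz fun t ht => (hrun t ht).1]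
  calc _ ≤ ∑ t ∈ range n, (g t + (a t - a (t + 1))) :=
        sum_le_sum fun t ht => hstep t (mem_range.1 ht)
    _ = ∑ t ∈ range n, g t - a n := by
        rw [sum_add_distrib, sum_range_sub', ha0, zero_sub, sub_eq_add_neg]
    _ ≤ _ := by
        simp only [a]
        linarith

end Run

/-! ### Means over i.i.d. sequences -/

section IidMean

lemma prod_update_mul {ι κ M : Type*} [Fintype ι] [DecidableEq ι] [CommMonoid M] (p : κ → M)
    (σ : ι → κ) (t : ι) (j : κ) :
    (∏ i, p (update σ t j i)) * p (σ t) = (∏ i, p (σ i)) * p j := by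
  rw [← mul_prod_erase univ _ (mem_univ t), ← mul_prod_erase univ (fun i => p (σ i)) (mem_univ t),
    update_self, prod_congr rfl fun i hi => by rw [update_of_ne (ne_of_mem_erase hi)]]
  ac_rfl

variable {n J : ℕ} (p : Fin J → ℝ)

noncomputable def iidMean (G : (Fin n → Fin J) → ℝ) : ℝ :=
  ∑ σ, (∏ i, p (σ i)) * G σ

lemma iidMean_const (hp : ∑ j, p j = 1) (c : ℝ) : iidMean p (fun _ : Fin n → Fin J => c) = c := by
  rw [iidMean, ← sum_mul, ← Fintype.sum_pow, hp, one_pow, one_mul]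

lemma iidMean_mono (hp : ∀ j, 0 ≤ p j) {G H : (Fin n → Fin J) → ℝ} (hGH : ∀ σ, G σ ≤ H σ) :
    iidMean p G ≤ iidMean p H :=
  sum_le_sum fun σ _ => mul_le_mul_of_nonneg_left (hGH σ) (prod_nonneg fun i _ => hp (σ i))

lemma iidMean_add (G H : (Fin n → Fin J) → ℝ) :
    iidMean p (fun σ => G σ + H σ) = iidMean p G + iidMean p H := by
  simp only [iidMean, mul_add, sum_add_distrib]

lemma iidMean_sum {κ : Type*} (s : Finset κ) (G : κ → (Fin n → Fin J) → ℝ) :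
    iidMean p (fun σ => ∑ k ∈ s, G k σ) = ∑ k ∈ s, iidMean p (G k) := by
  simp only [iidMean, mul_sum]
  exact sum_comm

/-- Resampling one coordinate of an i.i.d. sequence does not change its law: the involution
`(σ, j) ↦ (update σ t j, σ t)` carries one weight onto the other by `prod_update_mul`. -/
lemma iidMean_resample (hp : ∑ j, p j = 1) (t : Fin n) (G : (Fin n → Fin J) → ℝ) :
    iidMean p (fun σ => ∑ j, p j * G (update σ t j)) = iidMean p G := by
  have hinv : Involutive fun x : (Fin n → Fin J) × Fin J => (update x.1 t x.2, x.1 t) := by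
    rintro ⟨σ, j⟩
    simp
  calc iidMean p (fun σ => ∑ j, p j * G (update σ t j))
      = ∑ x : (Fin n → Fin J) × Fin J,
          (∏ i, p (update x.1 t x.2 i)) * p (x.1 t) * G (update x.1 t x.2) := by
        simp only [iidMean, Fintype.sum_prod_type, mul_sum]
        refine sum_congr rfl fun σ _ => sum_congr rfl fun j _ => ?_
        rw [prod_update_mul]
        ring
    _ = ∑ x : (Fin n → Fin J) × Fin J, (∏ i, p (x.1 i)) * p x.2 * G x.1 :=
        Equiv.sum_comp hinv.toPerm fun x : (Fin n → Fin J) × Fin J =>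
          (∏ i, p (x.1 i)) * p x.2 * G x.1
    _ = iidMean p G := by
        simp only [iidMean, Fintype.sum_prod_type, mul_right_comm _ (p _), ← mul_sum,
          hp, mul_one]

lemma iidMean_apply (hp : ∑ j, p j = 1) (t : Fin n) (f : Fin J → ℝ) :
    iidMean p (fun σ => f (σ t)) = ∑ j, p j * f j := by
  rw [← iidMean_resample p hp t]
  simp only [update_self]
  exact iidMean_const p hp _

end IidMean

/-! ### The schedule `ε_t` -/

section Schedule

noncomputable def schedule (B t : ℕ) : ℝ :=
  √((B : ℝ) / (2 * ((B : ℝ) + (t : ℝ) + 1)))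

variable {B : ℕ}

lemma schedule_pos (hB : 1 ≤ B) (t : ℕ) : 0 < schedule B t := by
  have : (1 : ℝ) ≤ B := by exact_mod_cast hB
  unfold schedule
  positivity

lemma schedule_antitone (B : ℕ) : Antitone (schedule B) := fun t t' htt' => by
  have : (t : ℝ) ≤ t' := by exact_mod_cast htt'
  unfold schedule
  gcongr

lemma sq_schedule (B t : ℕ) : schedule B t ^ 2 = B / (2 * (B + t + 1)) :=
  sq_sqrt (by positivity)

/-- `1 / √(u + 1) ≤ 2 (√(u + 1) - √u)` makes the sum of the schedule telescope. -/
lemma schedule_le_sub (B t : ℕ) :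
    schedule B t ≤ √(2 * B) * (√(B + (t + 1 : ℕ)) - √(B + t)) := by
  set x := √((B : ℝ) + t)
  set y := √((B : ℝ) + (t + 1 : ℕ))
  have hx : 0 ≤ x := sqrt_nonneg _
  have hx2 : x ^ 2 = B + t := sq_sqrt (by positivity)
  have hy2 : y ^ 2 = B + t + 1 := by rw [sq_sqrt (by positivity)]; push_cast; ring
  have hy : 0 < y := sqrt_pos.2 (by positivity)
  have hgap : 1 ≤ 2 * y * (y - x) := by nlinarith [sq_nonneg (y - x)]
  have hyx : 0 ≤ y - x := by nlinarith
  rw [schedule, sqrt_le_iff, mul_pow, sq_sqrt (by positivity)]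
  refine ⟨by positivity, ?_⟩
  rw [← hy2, div_le_iff₀ (by positivity)]
  have hB : (0 : ℝ) ≤ B := Nat.cast_nonneg B
  nlinarith [mul_le_mul hgap hgap zero_le_one (by positivity)]

lemma sum_mul_schedule_le (B n : ℕ) :
    ∑ t ∈ range n, B * schedule B t ≤ √(2 * B ^ 3 * (B + n)) := by
  have htel := sum_range_sub (fun t : ℕ => √((B : ℝ) + t)) n
  simp only [Nat.cast_zero, add_zero] at htel
  calc ∑ t ∈ range n, B * schedule B t
      ≤ ∑ t ∈ range n, B * (√(2 * B) * (√(B + (t + 1 : ℕ)) - √(B + t))) :=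
        sum_le_sum fun t _ => mul_le_mul_of_nonneg_left (schedule_le_sub B t) (Nat.cast_nonneg B)
    _ = B * √(2 * B) * (√(B + n) - √B) := by rw [← mul_sum, ← mul_sum, htel, mul_assoc]
    _ ≤ B * √(2 * B) * √(B + n) := by
        gcongr
        linarith [sqrt_nonneg (B : ℝ)]
    _ = √(2 * B ^ 3 * (B + n)) := by
        rw [show (2 : ℝ) * B ^ 3 * (B + n) = B ^ 2 * (2 * B) * (B + n) by ring,
          sqrt_mul (by positivity : (0 : ℝ) ≤ B ^ 2 * (2 * B)),
          sqrt_mul (by positivity : (0 : ℝ) ≤ B ^ 2), sqrt_sq (Nat.cast_nonneg B)]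

lemma mul_div_schedule_le (hB : 1 ≤ B) (n : ℕ) :
    B * (B - 1 : ℕ) / schedule B n ≤ √(2 * B ^ 3 * (B + n)) := by
  have hB' : (1 : ℝ) ≤ B := by exact_mod_cast hB
  have hε := schedule_pos hB n
  rw [Nat.cast_sub hB, Nat.cast_one]
  apply le_sqrt_of_sq_le
  rw [div_pow, sq_schedule, div_le_iff₀ (by positivity)]
  field_simp
  have hn : (0 : ℝ) ≤ n := Nat.cast_nonneg n
  nlinarith [mul_nonneg hn (by linarith : (0 : ℝ) ≤ B - 1), mul_nonneg (mul_nonneg hn hn) hn]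

lemma mul_div_schedule_add_sum_le (hB : 1 ≤ B) (n : ℕ) :
    B * (B - 1 : ℕ) / schedule B n + ∑ t ∈ range n, B * schedule B t ≤
      √(8 * B ^ 3 * (n + B)) := by
  rw [show (8 : ℝ) * B ^ 3 * (n + B) = 2 ^ 2 * (2 * B ^ 3 * (B + n)) by ring,
    sqrt_mul (by positivity), sqrt_sq zero_le_two, two_mul]
  exact add_le_add (mul_div_schedule_le hB n) (sum_mul_schedule_le B n)

end Schedule

/-! ### Expected cost of one step -/

section Step

variable {B n J : ℕ} {ε : ℝ} {s : Fin J → ℕ} {p : Fin J → ℝ}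

lemma seqSizes_coe (σ : Fin n → Fin J) (i : Fin n) : seqSizes n s σ i = s (σ i) := by
  simp [seqSizes]

lemma seqSizes_mem (hs : ∀ j, s j ∈ Icc 1 (B - 1)) (σ : Fin n → Fin J) {t : ℕ} (ht : t < n) :
    seqSizes n s σ t ∈ Icc 1 (B - 1) := by
  simpa [seqSizes, ht] using hs _

lemma sum_mul_minObj_sub_potential_le (hn : 1 ≤ n) (hε : 0 < ε) (hs : ∀ j, s j ∈ Icc 1 (B - 1))
    (hp0 : ∀ j, 0 ≤ p j) (hp : ∑ j, p j = 1) (M : ℕ → ℕ) :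
    ∑ j, p j * (minObj B ε M (s j) - potential B ε M) ≤
      iidMean p (fun σ : Fin n → Fin J => (optWaste B n (seqSizes n s σ) : ℝ)) / n +
        B * (1 - exp (-ε)) := by
  set price : Fin J → ℝ := fun j => minObj B ε M (s j) - potential B ε M
  have hn' : (0 : ℝ) < n := by exact_mod_cast hn
  have key : n * ∑ j, p j * price j ≤
      iidMean p (fun σ : Fin n → Fin J => (optWaste B n (seqSizes n s σ) : ℝ)) +
        n * (B * (1 - exp (-ε))) :=
    calc n * ∑ j, p j * price j = iidMean p (fun σ : Fin n → Fin J => ∑ i, price (σ i)) := by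
          simp [iidMean_sum, iidMean_apply p hp]
      _ ≤ iidMean p (fun σ : Fin n → Fin J =>
            (optWaste B n (seqSizes n s σ) : ℝ) + n * (B * (1 - exp (-ε)))) :=
          iidMean_mono p hp0 fun σ => by
            simpa only [seqSizes_coe] using
              sum_minObj_sub_potential_le_optWaste (N := M) hε fun t => seqSizes_mem hs σ
      _ = _ := by rw [iidMean_add, iidMean_const p hp]
  rw [div_add' _ _ _ hn'.ne', le_div_iff₀ hn']
  linarith

/-- The state before step `t` does not depend on the `t`-th item, so resampling that item
reduces the step to the bound for a fixed state. -/
lemma iidMean_minObj_sub_potential_le (hε : 0 < ε)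
    (hs : ∀ j, s j ∈ Icc 1 (B - 1)) (hp0 : ∀ j, 0 ≤ p j) (hp : ∑ j, p j = 1) (t : Fin n)
    (M : (Fin n → Fin J) → ℕ → ℕ) (hM : ∀ σ j, M (update σ t j) = M σ) :
    iidMean p (fun σ => minObj B ε (M σ) (s (σ t)) - potential B ε (M σ)) ≤
      iidMean p (fun σ : Fin n → Fin J => (optWaste B n (seqSizes n s σ) : ℝ)) / n +
        B * (1 - exp (-ε)) := by
  rw [← iidMean_resample p hp t]
  simp only [update_self, hM]
  calc _ ≤ iidMean p (fun _ => iidMean p (fun σ : Fin n → Fin J =>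
          (optWaste B n (seqSizes n s σ) : ℝ)) / n + B * (1 - exp (-ε))) :=
        iidMean_mono p hp0 fun σ => sum_mul_minObj_sub_potential_le t.pos hε hs hp0 hp (M σ)
    _ = _ := iidMean_const p hp _

lemma binState_congr {sz sz' place place' : ℕ → ℕ} {t : ℕ}
    (h : ∀ u < t, sz u = sz' u ∧ place u = place' u) :
    binState sz place t = binState sz' place' t := by
  induction t with
  | zero => rfl
  | succ t ih =>
    obtain ⟨hsz, hplace⟩ := h t t.lt_succ_self
    simp only [binState, ih fun u hu => h u (by omega), hsz, hplace]

lemma binState_update_of_adapted {place : (Fin n → Fin J) → ℕ → ℕ}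
    (hadapted : ∀ σ τ : Fin n → Fin J, ∀ t : ℕ,
      (∀ i : Fin n, (i : ℕ) ≤ t → σ i = τ i) → place σ t = place τ t)
    (σ : Fin n → Fin J) (t : Fin n) (j : Fin J) :
    binState (seqSizes n s (update σ t j)) (place (update σ t j)) t =
      binState (seqSizes n s σ) (place σ) t := by
  refine binState_congr fun u hu => ⟨?_, hadapted _ _ u fun i hi => ?_⟩
  · have hun : u < n := hu.trans t.isLt
    simp [seqSizes, hun, update_of_ne (Fin.ne_of_lt (show (⟨u, hun⟩ : Fin n) < t from hu))]
  · exact update_of_ne (Fin.ne_of_lt (show i < t from Fin.lt_def.2 (lt_of_le_of_lt hi hu))) j σ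

lemma iidMean_step_le {place : (Fin n → Fin J) → ℕ → ℕ}
    (hadapted : ∀ σ τ : Fin n → Fin J, ∀ t : ℕ,
      (∀ i : Fin n, (i : ℕ) ≤ t → σ i = τ i) → place σ t = place τ t)
    (hε : 0 < ε) (hs : ∀ j, s j ∈ Icc 1 (B - 1)) (hp0 : ∀ j, 0 ≤ p j) (hp : ∑ j, p j = 1)
    {t : ℕ} (ht : t < n) :
    iidMean p (fun σ => minObj B ε (binState (seqSizes n s σ) (place σ) t) (seqSizes n s σ t) -
        potential B ε (binState (seqSizes n s σ) (place σ) t)) ≤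
      iidMean p (fun σ : Fin n → Fin J => (optWaste B n (seqSizes n s σ) : ℝ)) / n + B * ε := by
  have hslack : B * (1 - exp (-ε)) ≤ B * ε :=
    mul_le_mul_of_nonneg_left (by linarith [add_one_le_exp (-ε)]) (Nat.cast_nonneg B)
  have hbound := iidMean_minObj_sub_potential_le hε hs hp0 hp ⟨t, ht⟩
    (fun σ => binState (seqSizes n s σ) (place σ) t)
    fun σ j => binState_update_of_adapted hadapted σ ⟨t, ht⟩ j
  simp only [← seqSizes_coe] at hbound
  linarith

end Step

end PDExp

open Finset PDExp

theorem pd_exp_varying_epsilon_general (B J n : ℕ) (hB : 1 ≤ B) (hn : 1 ≤ n)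
    (s : Fin J → ℕ) (hs_pos : ∀ j, 0 < s j)
    (hs_lt : ∀ j, s j < B)
    (p : Fin J → ℝ) (hp_nonneg : ∀ j, 0 ≤ p j) (hp_sum : ∑ j, p j = 1)
    (place : (Fin n → Fin J) → ℕ → ℕ)
    (hadapted : ∀ σ τ : Fin n → Fin J, ∀ t : ℕ,
      (∀ i : Fin n, (i : ℕ) ≤ t → σ i = τ i) → place σ t = place τ t)
    (hrun : ∀ σ : Fin n → Fin J, ∀ t < n,
      PDExpStep B (Real.sqrt ((B : ℝ) / (2 * ((B : ℝ) + (t : ℝ) + 1))))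
        (binState (seqSizes n s σ) (place σ) t) (seqSizes n s σ t) (place σ t)) :
    ∑ σ : Fin n → Fin J, (∏ i, p (σ i)) * algWaste B n (seqSizes n s σ) (place σ)
      ≤ (∑ σ : Fin n → Fin J, (∏ i, p (σ i)) * (optWaste B n (seqSizes n s σ) : ℝ))
        + Real.sqrt (8 * (B : ℝ) ^ 3 * ((n : ℝ) + (B : ℝ))) := by
  have hs : ∀ j, s j ∈ Icc 1 (B - 1) := fun j => mem_Icc.2 ⟨hs_pos j, by have := hs_lt j; omega⟩
  set opt := iidMean p fun σ : Fin n → Fin J => (optWaste B n (seqSizes n s σ) : ℝ)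
  set N := fun σ t => binState (seqSizes n s σ) (place σ) t
  set g := fun t σ => minObj B (schedule B t) (N σ t) (seqSizes n s σ t) -
    potential B (schedule B t) (N σ t)
  have hpath : ∀ σ, algWaste B n (seqSizes n s σ) (place σ) ≤
      B * (B - 1 : ℕ) / schedule B n + ∑ t ∈ range n, g t σ := fun σ =>
    algWaste_le_of_run (schedule_pos hB) (schedule_antitone B)
      (fun t ht => Icc_subset_Icc_right (Nat.sub_le B 1) (seqSizes_mem hs σ ht)) (hrun σ)
  calc iidMean p (fun σ => algWaste B n (seqSizes n s σ) (place σ))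
      ≤ iidMean p (fun σ => B * (B - 1 : ℕ) / schedule B n + ∑ t ∈ range n, g t σ) :=
        iidMean_mono p hp_nonneg hpath
    _ = B * (B - 1 : ℕ) / schedule B n + ∑ t ∈ range n, iidMean p (g t) := by
        rw [iidMean_add, iidMean_const p hp_sum, iidMean_sum]
    _ ≤ B * (B - 1 : ℕ) / schedule B n + ∑ t ∈ range n, (opt / n + B * schedule B t) := by
        gcongr with t ht
        exact iidMean_step_le hadapted (schedule_pos hB t) hs hp_nonneg hp_sum (mem_range.1 ht)
    _ = opt + (B * (B - 1 : ℕ) / schedule B n + ∑ t ∈ range n, B * schedule B t) := by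
        rw [sum_add_distrib, sum_const, card_range, nsmul_eq_mul,
          mul_div_cancel₀ _ (by positivity)]
        ring
    _ ≤ opt + Real.sqrt (8 * (B : ℝ) ^ 3 * ((n : ℝ) + (B : ℝ))) := by
        gcongr
        exact mul_div_schedule_add_sum_le hB n

/-- **Theorem 4 (open-ended PD-exp with time-varying `ε`).**
Items of integer sizes `0 < s 1 < ⋯ < s J < B` arrive i.i.d. with probabilities `p j`
and are packed online into bins of integer capacity `B` by the PD-exp algorithm run
with the time-varying parameter `ε(t) = √(B/(2(B+t)))` for the `t`-th arrival
(`t = 1, 2, …`; below arrivals are `0`-indexed, so step `t` uses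
`ε = √(B/(2(B+t+1)))`; the placement at step `t` may depend only on the items seen so
far, ties broken arbitrarily).  Then for every `n ≥ 1`,
`E[W^{PD-exp}(n)] ≤ E[W^{OPT}(n)] + √(8·B³·(n+B))`, where the expectation is over the
i.i.d. item sequence. -/
theorem pd_exp_varying_epsilon (B J n : ℕ) (hB : 1 ≤ B) (hJ : 1 ≤ J) (hn : 1 ≤ n)
    (s : Fin J → ℕ) (hs_pos : ∀ j, 0 < s j) (hs_mono : StrictMono s)
    (hs_lt : ∀ j, s j < B)
    (p : Fin J → ℝ) (hp_nonneg : ∀ j, 0 ≤ p j) (hp_sum : ∑ j, p j = 1)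
    (place : (Fin n → Fin J) → ℕ → ℕ)
    (hadapted : ∀ σ τ : Fin n → Fin J, ∀ t : ℕ,
      (∀ i : Fin n, (i : ℕ) ≤ t → σ i = τ i) → place σ t = place τ t)
    (hrun : ∀ σ : Fin n → Fin J, ∀ t < n,
      PDExpStep B (Real.sqrt ((B : ℝ) / (2 * ((B : ℝ) + (t : ℝ) + 1))))
        (binState (seqSizes n s σ) (place σ) t) (seqSizes n s σ t) (place σ t)) :
    ∑ σ : Fin n → Fin J, (∏ i, p (σ i)) * algWaste B n (seqSizes n s σ) (place σ)
      ≤ (∑ σ : Fin n → Fin J, (∏ i, p (σ i)) * (optWaste B n (seqSizes n s σ) : ℝ))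
        + Real.sqrt (8 * (B : ℝ) ^ 3 * ((n : ℝ) + (B : ℝ))) :=
  pd_exp_varying_epsilon_general B J n hB hn s hs_pos hs_lt p hp_nonneg hp_sum place hadapted hrun
end

section
/- Under the PD-quad algorithm run with a constant parameter ε(t) = ε ∈ (0,1], deterministically for every arrival sequence, every time t ≥ 0, and every level h ∈ {1,…,B−1}, the number of bins of level h satisfies N_h(t) ≤ (B+1)·h/ε. -/
/-!
When PD-quad places an item of size `s` at a level `h` with `h + s < B`, that choice must beat
closing a bin at level `B - s` instead, which costs `B` more in the indicator term but does not
raise the potential `∑ N²`. Placing at `h` raises the potential by at least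
`2 N_{h+s} + 1 - 2 N_h`, so `ε N_{h+s} ≤ B + ε N_h` whenever level `h + s` gains a bin. Strong
induction on the level (level `0` never gains bins) then gives `ε N_h ≤ (B + 1) h` for every
level `h < B` at all times.
-/

section Update

variable (N : ℕ → ℕ) {h s : ℕ}

theorem binUpdate_add_self (hs : 0 < s) : binUpdate N h s (h + s) = N (h + s) + 1 := by
  simp only [binUpdate, if_true]
  rw [if_neg (by omega)]

theorem binUpdate_le_of_ne {h' : ℕ} (hh' : h' ≠ h + s) : binUpdate N h s h' ≤ N h' := by
  simp only [binUpdate, if_neg hh', add_zero]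
  split_ifs <;> omega

theorem sq_add_le_sq_binUpdate (hs : 0 < s) (h' : ℕ) :
    N h' ^ 2 + (if h' = h + s then 2 * N h' + 1 else 0) ≤
      binUpdate N h s h' ^ 2 + (if h' = h then 2 * N h' else 0) := by
  by_cases hgain : h' = h + s
  · subst hgain
    rw [binUpdate_add_self N hs, if_pos rfl, if_neg (by omega)]
    linarith
  · simp only [binUpdate, if_neg hgain, add_zero]
    split_ifs with hlose
    · -- `(n - 1)² + 2n ≥ n²` also holds for truncated subtraction at `n = 0`
      obtain _ | n := N h'
      · simp
      · rw [Nat.add_sub_cancel]; nlinarith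
    all_goals omega

theorem sum_sq_add_le_sum_sq_binUpdate (hs : 0 < s) {I : Finset ℕ} (hI : h + s ∈ I) :
    ∑ h' ∈ I, N h' ^ 2 + (2 * N (h + s) + 1) ≤ ∑ h' ∈ I, binUpdate N h s h' ^ 2 + 2 * N h := by
  have hsum := Finset.sum_le_sum fun h' (_ : h' ∈ I) => sq_add_le_sq_binUpdate N (h := h) hs h'
  rw [Finset.sum_add_distrib, Finset.sum_add_distrib, Finset.sum_ite_eq' I (h + s),
    Finset.sum_ite_eq' I h, if_pos hI] at hsum
  have hlose : (if h ∈ I then 2 * N h else 0) ≤ 2 * N h := by split_ifs <;> omega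
  omega

theorem sum_sq_binUpdate_le {I : Finset ℕ} (hI : ∀ h' ∈ I, h' ≠ h + s) :
    ∑ h' ∈ I, binUpdate N h s h' ^ 2 ≤ ∑ h' ∈ I, N h' ^ 2 :=
  Finset.sum_le_sum fun h' hh' => Nat.pow_le_pow_left (binUpdate_le_of_ne N (hI h' hh')) 2

end Update

theorem PDQuadStep.mul_le_add {B : ℕ} {ε : ℝ} {N : ℕ → ℕ} {s h : ℕ}
    (hstep : PDQuadStep B ε N s h) (hs : 0 < s) (hε : 0 ≤ ε) (hhs : h + s ≤ B - 1) :
    ε * N (h + s) ≤ B + ε * N h := by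
  have hgain := Nat.cast_le (α := ℝ) |>.2 <| sum_sq_add_le_sum_sq_binUpdate N hs
    (I := Finset.Icc 1 (B - 1)) (Finset.mem_Icc.mpr ⟨by omega, hhs⟩)
  have hclose := Nat.cast_le (α := ℝ) |>.2 <|
    sum_sq_binUpdate_le N (h := B - s) (s := s) (I := Finset.Icc 1 (B - 1)) fun h' hh' => by
      rw [Finset.mem_Icc] at hh'
      omega
  push_cast at hgain hclose
  have hmin := hstep.2 (B - s) le_rfl
  simp only [quadObj, if_true, mul_one] at hmin
  have hind : (0 : ℝ) ≤ B * (if h = B - s then 1 else 0) := by positivity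
  have := mul_le_mul_of_nonneg_left hgain (by positivity : 0 ≤ ε / 2)
  have := mul_le_mul_of_nonneg_left hclose (by positivity : 0 ≤ ε / 2)
  linarith

section Run

variable {sz place : ℕ → ℕ} {t : ℕ}

theorem binState_succ_add_self (hsz : 0 < sz t) :
    binState sz place (t + 1) (place t + sz t) = binState sz place t (place t + sz t) + 1 :=
  binUpdate_add_self _ hsz

theorem binState_succ_le_of_ne {h : ℕ} (hh : h ≠ place t + sz t) :
    binState sz place (t + 1) h ≤ binState sz place t h :=
  binUpdate_le_of_ne _ hh

theorem mul_binState_le_of_pdQuadStep {B : ℕ} {ε : ℝ} (hsz : ∀ t, 0 < sz t)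
    (hε0 : 0 < ε) (hε1 : ε ≤ 1)
    (hrun : ∀ t, PDQuadStep B ε (binState sz place t) (sz t) (place t))
    (h : ℕ) (hh : h ≤ B - 1) (t : ℕ) :
    ε * binState sz place t h ≤ (B + 1) * h := by
  induction h using Nat.strong_induction_on generalizing t with
  | _ h IH =>
  induction t with
  | zero => simp only [binState, CharP.cast_eq_zero, mul_zero]; positivity
  | succ t iht =>
    by_cases hgain : h = place t + sz t
    · subst hgain
      have hstep := (hrun t).mul_le_add (hsz t) hε0.le hh
      have hbelow := IH (place t) (Nat.lt_add_of_pos_right (hsz t)) (by omega) t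
      have hlevel : ((place t : ℕ) : ℝ) + 1 ≤ ((place t + sz t : ℕ) : ℝ) := by
        exact_mod_cast Nat.add_le_add_left (hsz t) _
      rw [binState_succ_add_self (hsz t)]
      push_cast at hlevel ⊢
      nlinarith
    · calc ε * binState sz place (t + 1) h ≤ ε * binState sz place t h := by
            gcongr
            exact binState_succ_le_of_ne hgain
        _ ≤ (B + 1) * h := iht

end Run

theorem pd_quad_level_count_invariant_general (B J : ℕ)
    (s : Fin J → ℕ) (hs_pos : ∀ j, 0 < s j)
    (ε : ℝ) (hε0 : 0 < ε) (hε1 : ε ≤ 1)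
    (sz : ℕ → ℕ) (hsz : ∀ t, ∃ j, sz t = s j)
    (place : ℕ → ℕ)
    (hrun : ∀ t, PDQuadStep B ε (binState sz place t) (sz t) (place t)) :
    ∀ t : ℕ, ∀ h : ℕ, 1 ≤ h → h ≤ B - 1 →
      (binState sz place t h : ℝ) ≤ ((B : ℝ) + 1) * (h : ℝ) / ε := by
  intro t h _ hh
  have hsz_pos : ∀ t, 0 < sz t := fun t => (hsz t).elim fun j hj => hj ▸ hs_pos j
  rw [le_div_iff₀ hε0, mul_comm]
  exact mul_binState_le_of_pdQuadStep hsz_pos hε0 hε1 hrun h hh t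

/-- **Deterministic level-count invariant for PD-quad with constant `ε`.**
Items of integer sizes drawn from `{s 1, …, s J}` (with `0 < s 1 < ⋯ < s J < B`)
arrive one at a time and are packed by the PD-quad algorithm run with a constant
parameter `ε ∈ (0, 1]` (ties broken arbitrarily).  Then deterministically, for every
arrival sequence, every time `t ≥ 0`, and every level `h ∈ {1, …, B−1}`, the number of
bins of level `h` satisfies `N_h(t) ≤ (B+1)·h/ε`. -/
theorem pd_quad_level_count_invariant (B J : ℕ) (hB : 1 ≤ B) (hJ : 1 ≤ J)
    (s : Fin J → ℕ) (hs_pos : ∀ j, 0 < s j) (hs_mono : StrictMono s)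
    (hs_lt : ∀ j, s j < B)
    (ε : ℝ) (hε0 : 0 < ε) (hε1 : ε ≤ 1)
    (sz : ℕ → ℕ) (hsz : ∀ t, ∃ j, sz t = s j)
    (place : ℕ → ℕ)
    (hrun : ∀ t, PDQuadStep B ε (binState sz place t) (sz t) (place t)) :
    ∀ t : ℕ, ∀ h : ℕ, 1 ≤ h → h ≤ B - 1 →
      (binState sz place t h : ℝ) ≤ ((B : ℝ) + 1) * (h : ℝ) / ε :=
  pd_quad_level_count_invariant_general B J s hs_pos ε hε0 hε1 sz hsz place hrun
end

section
/- Let B ≥ 1 be an integer and let N : {1,…,B−1} → ℕ be arbitrary (extend N by N(h) = 0 for h ≥ B). Let y_1',…,y_m' be a nonempty list of positive integers with Σ_{i=1}^m y_i' ≤ B. Then there exist a permutation y_1,…,y_m of the list and an index 0 ≤ last ≤ m such that, setting S_i = Σ_{j=1}^{i} y_j (S_0 = 0): (i) N(S_i) > 0 for every 1 ≤ i ≤ last, and (ii) N(S_last + y_i) = 0 for every i with last < i ≤ m. -/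
/-!
Greedy argument: from the current level `S`, move to the front any remaining item `y` whose
level `S + y` is still open and continue from `S + y`; when no remaining item leads to an open
level, stop. The items placed so far form the prefix up to `last`, and the items left over are
exactly those that cannot be placed next.
-/

namespace List

variable {M : Type*} [AddMonoid M]

theorem exists_perm_append_prefix_sum_forall_not (P : M → Prop) (S : M) (l : List M) :
    ∃ a b : List M, (a ++ b).Perm l ∧
      (∀ i, 1 ≤ i → i ≤ a.length → P (S + (a.take i).sum)) ∧
      ∀ y ∈ b, ¬ P (S + a.sum + y) := by
  by_cases hopen : ∃ y ∈ l, P (S + y)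
  · obtain ⟨y, hyl, hy⟩ := hopen
    obtain ⟨s, t, rfl⟩ := append_of_mem hyl
    obtain ⟨a, b, hperm, hprefix, hstuck⟩ :=
      exists_perm_append_prefix_sum_forall_not P (S + y) (s ++ t)
    refine ⟨y :: a, b, (hperm.cons y).trans perm_middle.symm, ?_, ?_⟩
    · rintro (_ | _ | j) h1 h2
      · omega
      · simpa using hy
      · simpa [add_assoc] using hprefix (j + 1) (by omega) (by simpa using h2)
    · simpa [add_assoc] using hstuck
  · push Not at hopen
    exact ⟨[], l, by simp, fun i h1 h2 => by simp at h2; omega, by simpa using hopen⟩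
termination_by l.length
decreasing_by simp_all

end List

theorem ordering_threshold_exists_general (N : ℕ → ℕ) (l : List ℕ) :
    ∃ l' : List ℕ, l'.Perm l ∧ ∃ last ≤ l'.length,
      (∀ i, 1 ≤ i → i ≤ last → 0 < N ((l'.take i).sum)) ∧
      (∀ i, last ≤ i → i < l'.length → N ((l'.take last).sum + l'.getD i 0) = 0) := by
  obtain ⟨a, b, hperm, hprefix, hstuck⟩ :=
    List.exists_perm_append_prefix_sum_forall_not (fun h => 0 < N h) 0 l
  refine ⟨a ++ b, hperm, a.length, by simp, fun i h1 h2 => ?_, fun i h1 h2 => ?_⟩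
  · simpa [List.take_append_of_le_length h2] using hprefix i h1 h2
  · have hmem : (a ++ b).getD i 0 ∈ b := by
      rw [List.getD_append_right _ _ _ _ h1, List.getD_eq_getElem _ _ (by simp at h2; omega)]
      exact List.getElem_mem _
    simpa using hstuck _ hmem

/-- **Ordering-and-threshold existence (reference policy `A_F` of Csirik et al.).**
Let `B ≥ 1` and let `N : ℕ → ℕ` give the number of partially filled bins of each level,
with `N h = 0` for `h ≥ B`.  Let `l` be a nonempty list of positive integers (the items
of one bin of an optimal packing) with `l.sum ≤ B`.  Then there is a permutation `l'` of
`l` (with `1`-based entries `y_1, …, y_m` and partial sums `S_i = y_1 + ⋯ + y_i`) and a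
threshold `0 ≤ last ≤ m` such that `N (S_i) > 0` for all `1 ≤ i ≤ last`, and
`N (S_last + y_i) = 0` for all `last < i ≤ m` (stated below with `0`-based indices,
`y_i = l'.getD (i-1) 0`). -/
theorem ordering_threshold_exists (B : ℕ) (hB : 1 ≤ B) (N : ℕ → ℕ)
    (hN : ∀ h, B ≤ h → N h = 0) (l : List ℕ) (hl : l ≠ [])
    (hpos : ∀ y ∈ l, 0 < y) (hsum : l.sum ≤ B) :
    ∃ l' : List ℕ, l'.Perm l ∧ ∃ last ≤ l'.length,
      (∀ i, 1 ≤ i → i ≤ last → 0 < N ((l'.take i).sum)) ∧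
      (∀ i, last ≤ i → i < l'.length → N ((l'.take last).sum + l'.getD i 0) = 0) :=
  ordering_threshold_exists_general N l
end

section
/- Let k > 0 and a > 0 be reals, let B ≥ 1 and n ≥ 1 be integers, set ε(t) = k/√(t+a) for integer t ≥ 1, and let n_h : {0,1,…,n} → ℕ be arbitrary for each h ∈ {1,…,B−1}. Then Σ_{h=1}^{B−1} Σ_{t=1}^{n} (1/ε(t))·(e^{−ε(t)·n_h(t)} − e^{−ε(t)·n_h(t−1)}) ≥ −(B−1)·√(a+n)/k. -/
/-!
Write `φ ε y = (1 / ε) * exp (-ε * y)`. For a fixed level the inner sum telescopes to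
`φ (ε n) (x n) - φ (ε 1) (x 0)` plus the switching terms `φ (ε t) (x t) - φ (ε (t+1)) (x t)`.
Since `(1 - exp (-ε * y)) / ε` is antitone in `ε` (convexity of `exp`), every switching term is
at least its value at `y = 0`; those values telescope too, so each level contributes at least
`-1 / ε n = -√(n + a) / k`.
-/

open Real Finset

theorem mul_one_sub_exp_neg_le {p q : ℝ} (hq : 0 < q) (hqp : q ≤ p) (x : ℝ) :
    q * (1 - exp (-p * x)) ≤ p * (1 - exp (-q * x)) := by
  have hp : 0 < p := hq.trans_le hqp
  -- `-q * x` is the convex combination of `-p * x` and `0` with weights `q / p`, `1 - q / p`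
  have hconv := convexOn_exp.2 (Set.mem_univ (-p * x)) (Set.mem_univ 0)
    (div_nonneg hq.le hp.le) (sub_nonneg.2 ((div_le_one hp).2 hqp)) (add_sub_cancel _ 1)
  have hpoint : q / p * (-p * x) = -q * x := by
    field_simp
  simp only [smul_eq_mul, mul_zero, add_zero, exp_zero, mul_one, hpoint] at hconv
  have hmul := mul_le_mul_of_nonneg_left hconv hp.le
  rw [mul_add, ← mul_assoc, mul_div_cancel₀ q hp.ne', mul_sub, mul_div_cancel₀ q hp.ne'] at hmul
  linarith

theorem one_div_mul_exp_neg_sub_le {p q : ℝ} (hq : 0 < q) (hqp : q ≤ p) (x : ℝ) :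
    1 / q * exp (-q * x) - 1 / q ≤ 1 / p * exp (-p * x) - 1 / p := by
  have hp : 0 < p := hq.trans_le hqp
  have key := mul_one_sub_exp_neg_le hq hqp x
  rw [div_mul_eq_mul_div, div_mul_eq_mul_div, one_mul, one_mul, div_sub_div_same,
    div_sub_div_same, div_le_div_iff₀ hq hp]
  linarith

theorem sum_one_div_mul_exp_neg_sub_ge {ε : ℕ → ℝ} (hε : ∀ t, 0 < ε t) (hanti : Antitone ε)
    {x : ℕ → ℝ} (hx : 0 ≤ x 0) (n : ℕ) :
    1 / ε n * exp (-ε n * x n) - 1 / ε n ≤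
      ∑ t ∈ Icc 1 n, 1 / ε t * (exp (-ε t * x t) - exp (-ε t * x (t - 1))) := by
  induction n with
  | zero =>
    have hexp : exp (-ε 0 * x 0) ≤ 1 :=
      exp_le_one_iff.2 (by nlinarith [hε 0])
    simpa using mul_le_of_le_one_right (one_div_pos.2 (hε 0)).le hexp
  | succ n ih =>
    rw [sum_Icc_succ_top (Nat.le_add_left 1 n), Nat.add_sub_cancel]
    have hstep := one_div_mul_exp_neg_sub_le (hε (n + 1)) (hanti n.le_succ) (x n)
    linarith

theorem pd_exp_potential_telescoping_bound_general (k a : ℝ) (hk : 0 < k) (ha : 0 < a)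
    (B n : ℕ) (hB : 1 ≤ B) (nh : ℕ → ℕ → ℕ) :
    ∑ h ∈ Finset.Icc 1 (B - 1), ∑ t ∈ Finset.Icc 1 n,
        (1 / (k / Real.sqrt ((t : ℝ) + a))) *
          (Real.exp (-(k / Real.sqrt ((t : ℝ) + a)) * (nh h t : ℝ)) -
            Real.exp (-(k / Real.sqrt ((t : ℝ) + a)) * (nh h (t - 1) : ℝ)))
      ≥ -((B : ℝ) - 1) * Real.sqrt (a + (n : ℝ)) / k := by
  set ε : ℕ → ℝ := fun t => k / √((t : ℝ) + a)
  have hε : ∀ t, 0 < ε t := fun t => div_pos hk (sqrt_pos.2 (by positivity))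
  have hanti : Antitone ε := fun s t hst =>
    div_le_div_of_nonneg_left hk.le (sqrt_pos.2 (by positivity))
      (sqrt_le_sqrt (by gcongr))
  have hinner (h : ℕ) : -(1 / ε n) ≤ ∑ t ∈ Icc 1 n,
      1 / ε t * (exp (-ε t * nh h t) - exp (-ε t * nh h (t - 1))) := by
    have hpos : 0 ≤ 1 / ε n * exp (-ε n * nh h n) :=
      mul_nonneg (one_div_pos.2 (hε n)).le (exp_nonneg _)
    linarith [sum_one_div_mul_exp_neg_sub_ge hε hanti (x := fun t => (nh h t : ℝ))
      (Nat.cast_nonneg _) n]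
  calc ∑ h ∈ Icc 1 (B - 1), ∑ t ∈ Icc 1 n,
        1 / ε t * (exp (-ε t * nh h t) - exp (-ε t * nh h (t - 1)))
      ≥ ∑ _h ∈ Icc 1 (B - 1), -(1 / ε n) := sum_le_sum fun h _ => hinner h
    _ = -((B : ℝ) - 1) * √(a + n) / k := by
      rw [sum_const, Nat.card_Icc, Nat.add_sub_cancel, nsmul_eq_mul, Nat.cast_sub hB,
        Nat.cast_one, add_comm a]
      simp only [ε]
      field_simp

/-- **Lower bound on the accumulated potential change for open-ended PD-exp.**
Let `k > 0` and `a > 0` be reals, `B ≥ 1` and `n ≥ 1` integers, and set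
`ε t = k / √(t+a)`.  For arbitrary level counts `nh h t : ℕ` (number of bins of level
`h` after `t` items),
`∑_{h=1}^{B−1} ∑_{t=1}^{n} (1/ε t)·(e^{−ε t · nh h t} − e^{−ε t · nh h (t−1)})
  ≥ −(B−1)·√(a+n)/k`. -/
theorem pd_exp_potential_telescoping_bound (k a : ℝ) (hk : 0 < k) (ha : 0 < a)
    (B n : ℕ) (hB : 1 ≤ B) (hn : 1 ≤ n) (nh : ℕ → ℕ → ℕ) :
    ∑ h ∈ Finset.Icc 1 (B - 1), ∑ t ∈ Finset.Icc 1 n,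
        (1 / (k / Real.sqrt ((t : ℝ) + a))) *
          (Real.exp (-(k / Real.sqrt ((t : ℝ) + a)) * (nh h t : ℝ)) -
            Real.exp (-(k / Real.sqrt ((t : ℝ) + a)) * (nh h (t - 1) : ℝ)))
      ≥ -((B : ℝ) - 1) * Real.sqrt (a + (n : ℝ)) / k :=
  pd_exp_potential_telescoping_bound_general k a hk ha B n hB nh
end
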